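/- arXiv:1404.0740 — 7 statements merged into one kernel-verified Lean document; each statement's English description precedes it below -/
import Mathlib

section
/- Let f ∈ L¹_loc(ℝ) and suppose 0 is a right Lebesgue point of f with value f_L(0₊) = α. Define (Sf)(λ) = (1/π) ∫₀^{√λ} f(ν) (λ − ν²)^{−1/2} dν for λ > 0. Then Sf ∈ L¹_loc((0,∞)), 0 is a right Lebesgue point of Sf, and (Sf)_L(0₊) = α/2. -/
/-!
Since `∫₀^{√λ} (λ - ν²)^{-1/2} dν = π/2`, for a.e. `λ` we have
`Sf(λ) - α/2 = π⁻¹ ∫₀^{√λ} (f(ν) - α) (λ - ν²)^{-1/2} dν`. Integrating `|·|` over `λ ∈ (0, h]`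
and exchanging the order of integration, the inner integral is
`∫_{ν²}^h (λ - ν²)^{-1/2} dλ = 2√(h - ν²) ≤ 2√h`, so
`(1/h) ∫₀^h |Sf - α/2| ≤ (2/π) (1/√h) ∫₀^{√h} |f - α|`,
which tends to `0` because `0` is a right Lebesgue point of `f` and `√h → 0⁺`.
The same Fubini bound gives the local integrability of `Sf`.
-/

open MeasureTheory Filter Set
open Topology

/-- The paper's `Sf` is `π⁻¹ * abelIntegral f`. -/
noncomputable def abelIntegral (g : ℝ → ℝ) (lam : ℝ) : ℝ :=
  ∫ ν in Ioc (0 : ℝ) (Real.sqrt lam), g ν / Real.sqrt (lam - ν ^ 2)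

lemma integrableOn_Ioc_and_integral_eq_of_hasDerivAt_of_nonneg {F F' : ℝ → ℝ} {a b : ℝ}
    (hab : a ≤ b) (hcont : ContinuousOn F (Icc a b))
    (hderiv : ∀ x ∈ Ioo a b, HasDerivAt F (F' x) x) (hpos : ∀ x ∈ Ioo a b, 0 ≤ F' x) :
    IntegrableOn F' (Ioc a b) ∧ ∫ x in Ioc a b, F' x = F b - F a := by
  have hint := intervalIntegral.integrableOn_deriv_of_nonneg hcont hderiv hpos
  refine ⟨hint, ?_⟩
  rw [← intervalIntegral.integral_of_le hab]
  exact intervalIntegral.integral_eq_sub_of_hasDerivAt_of_le hab hcont hderiv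
    ((intervalIntegrable_iff_integrableOn_Ioc_of_le hab).2 hint)

lemma integrableOn_and_integral_inv_sqrt_sub_sq {lam : ℝ} (hlam : 0 < lam) :
    IntegrableOn (fun ν => (Real.sqrt (lam - ν ^ 2))⁻¹) (Ioc 0 (Real.sqrt lam)) ∧
      ∫ ν in Ioc 0 (Real.sqrt lam), (Real.sqrt (lam - ν ^ 2))⁻¹ = Real.pi / 2 := by
  set s := Real.sqrt lam
  have hs : 0 < s := Real.sqrt_pos.2 hlam
  have hderiv : ∀ x ∈ Ioo 0 s,
      HasDerivAt (fun ν => Real.arcsin (ν / s)) (Real.sqrt (lam - x ^ 2))⁻¹ x := by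
    intro x ⟨hx0, hxs⟩
    have hlt : x / s < 1 := (div_lt_one hs).2 hxs
    have hgt : -1 < x / s := by have := div_pos hx0 hs; linarith
    refine ((Real.hasDerivAt_arcsin hgt.ne' hlt.ne).comp x
      ((hasDerivAt_id x).div_const s)).congr_deriv ?_
    have hsq : lam - x ^ 2 = (1 - (x / s) ^ 2) * s ^ 2 := by
      field_simp
      rw [Real.sq_sqrt hlam.le]
    have hnonneg : 0 ≤ 1 - (x / s) ^ 2 := by nlinarith
    rw [hsq, Real.sqrt_mul hnonneg, Real.sqrt_sq hs.le, mul_inv, one_div, one_div]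
  obtain ⟨hint, hval⟩ := integrableOn_Ioc_and_integral_eq_of_hasDerivAt_of_nonneg hs.le
    (by fun_prop) hderiv (fun x _ => inv_nonneg.2 (Real.sqrt_nonneg _))
  refine ⟨hint, ?_⟩
  rw [hval, div_self hs.ne', zero_div, Real.arcsin_one, Real.arcsin_zero, sub_zero]

lemma integrableOn_and_integral_inv_sqrt_sub {a b c : ℝ} (hac : a ≤ c) (hcb : c ≤ b) :
    IntegrableOn (fun x => (Real.sqrt (x - c))⁻¹) (Ioc a b) ∧
      ∫ x in Ioc a b, (Real.sqrt (x - c))⁻¹ = 2 * Real.sqrt (b - c) := by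
  have hderiv : ∀ x ∈ Ioo c b,
      HasDerivAt (fun y => 2 * Real.sqrt (y - c)) (Real.sqrt (x - c))⁻¹ x := by
    intro x hx
    refine ((((hasDerivAt_id x).sub_const c).sqrt (sub_pos.2 hx.1).ne').const_mul
      2).congr_deriv ?_
    rw [id, one_div, mul_inv, ← mul_assoc, mul_inv_cancel₀ two_ne_zero, one_mul]
  obtain ⟨hint, hval⟩ := integrableOn_Ioc_and_integral_eq_of_hasDerivAt_of_nonneg hcb
    (by fun_prop) hderiv (fun x _ => inv_nonneg.2 (Real.sqrt_nonneg _))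
  -- left of `c` the integrand is `(√0)⁻¹ = 0`
  have hzero : ∀ x ∈ Ioc a b \ Ioc c b, (Real.sqrt (x - c))⁻¹ = 0 := fun x hx => by
    have hxc : x ≤ c := by by_contra! h; exact hx.2 ⟨h, hx.1.2⟩
    rw [Real.sqrt_eq_zero_of_nonpos (by linarith), inv_zero]
  refine ⟨hint.of_forall_sdiff_eq_zero measurableSet_Ioc hzero, ?_⟩
  rw [setIntegral_eq_of_subset_of_forall_sdiff_eq_zero measurableSet_Ioc
    (Ioc_subset_Ioc_left hac) hzero, hval, sub_self, Real.sqrt_zero, mul_zero, sub_zero]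

-- For `ν > √lam` the integrand has `√(lam - ν²) = 0`, so the range of integration can be enlarged.
lemma abelIntegral_eq_integral_Ioc {g : ℝ → ℝ} {lam b : ℝ} (hlam : lam ≤ b) :
    abelIntegral g lam = ∫ ν in Ioc 0 (Real.sqrt b), g ν / Real.sqrt (lam - ν ^ 2) := by
  refine (setIntegral_eq_of_subset_of_forall_sdiff_eq_zero measurableSet_Ioc
    (Ioc_subset_Ioc_right (Real.sqrt_le_sqrt hlam)) fun ν hν => ?_).symm
  have hlt : Real.sqrt lam < ν := by by_contra! h; exact hν.2 ⟨hν.1.1, h⟩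
  rw [Real.sqrt_eq_zero_of_nonpos (by linarith [(Real.sqrt_lt' hν.1.1).1 hlt]), div_zero]

lemma integrableOn_and_integral_norm_div_sqrt_sub_sq_le {b ν : ℝ} (y : ℝ)
    (hν : ν ∈ Ioc 0 (Real.sqrt b)) :
    IntegrableOn (fun lam => y / Real.sqrt (lam - ν ^ 2)) (Ioc 0 b) ∧
      ∫ lam in Ioc 0 b, ‖y / Real.sqrt (lam - ν ^ 2)‖ ≤ 2 * Real.sqrt b * |y| := by
  obtain ⟨hint, hval⟩ := integrableOn_and_integral_inv_sqrt_sub (sq_nonneg ν)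
    ((Real.le_sqrt' hν.1).1 hν.2)
  constructor
  · simp only [div_eq_mul_inv]
    exact hint.const_mul y
  · simp only [div_eq_mul_inv, Real.norm_eq_abs, abs_mul, abs_inv,
      abs_of_nonneg (Real.sqrt_nonneg _)]
    rw [integral_const_mul, hval]
    have : Real.sqrt (b - ν ^ 2) ≤ Real.sqrt b := Real.sqrt_le_sqrt (by nlinarith)
    nlinarith [abs_nonneg y]

lemma integrable_abelKernel {g : ℝ → ℝ} {b : ℝ} (hg : IntegrableOn g (Ioc 0 (Real.sqrt b))) :
    Integrable (fun p : ℝ × ℝ => g p.2 / Real.sqrt (p.1 - p.2 ^ 2))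
      ((volume.restrict (Ioc 0 b)).prod (volume.restrict (Ioc 0 (Real.sqrt b)))) := by
  have hmeas : AEStronglyMeasurable (fun p : ℝ × ℝ => g p.2 / Real.sqrt (p.1 - p.2 ^ 2))
      ((volume.restrict (Ioc 0 b)).prod (volume.restrict (Ioc 0 (Real.sqrt b)))) :=
    (hg.aemeasurable.comp_snd.div (by fun_prop : Measurable
      fun p : ℝ × ℝ => Real.sqrt (p.1 - p.2 ^ 2)).aemeasurable).aestronglyMeasurable
  refine (integrable_prod_iff' hmeas).2 ⟨?_, ?_⟩
  · filter_upwards [ae_restrict_mem measurableSet_Ioc] with ν hν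
    exact (integrableOn_and_integral_norm_div_sqrt_sub_sq_le (g ν) hν).1
  · refine (hg.norm.const_mul (2 * Real.sqrt b)).mono'
      (hmeas.norm.prod_swap.integral_prod_right') ?_
    filter_upwards [ae_restrict_mem measurableSet_Ioc] with ν hν
    rw [Real.norm_eq_abs, abs_of_nonneg (integral_nonneg fun _ => norm_nonneg _),
      Real.norm_eq_abs]
    exact (integrableOn_and_integral_norm_div_sqrt_sub_sq_le (g ν) hν).2

lemma integrableOn_abelIntegral {g : ℝ → ℝ} {b : ℝ}
    (hg : IntegrableOn g (Ioc 0 (Real.sqrt b))) :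
    IntegrableOn (abelIntegral g) (Ioc 0 b) := by
  refine (integrable_abelKernel hg).integral_prod_left.congr ?_
  filter_upwards [ae_restrict_mem measurableSet_Ioc] with lam hlam
  exact (abelIntegral_eq_integral_Ioc hlam.2).symm

lemma ae_integrableOn_abelIntegrand {g : ℝ → ℝ} {b : ℝ}
    (hg : IntegrableOn g (Ioc 0 (Real.sqrt b))) :
    ∀ᵐ lam ∂(volume.restrict (Ioc 0 b)),
      IntegrableOn (fun ν => g ν / Real.sqrt (lam - ν ^ 2)) (Ioc 0 (Real.sqrt lam)) := by
  filter_upwards [(integrable_abelKernel hg).prod_right_ae,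
    ae_restrict_mem measurableSet_Ioc] with lam hint hlam
  exact IntegrableOn.mono_set hint (Ioc_subset_Ioc_right (Real.sqrt_le_sqrt hlam.2))

lemma integral_abs_abelIntegral_le {g : ℝ → ℝ} {b : ℝ}
    (hg : IntegrableOn g (Ioc 0 (Real.sqrt b))) :
    ∫ lam in Ioc 0 b, |abelIntegral g lam| ≤
      2 * Real.sqrt b * ∫ ν in Ioc 0 (Real.sqrt b), |g ν| := by
  have hK := integrable_abelKernel hg
  calc ∫ lam in Ioc 0 b, |abelIntegral g lam|
      ≤ ∫ lam in Ioc 0 b, ∫ ν in Ioc 0 (Real.sqrt b), ‖g ν / Real.sqrt (lam - ν ^ 2)‖ := by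
        refine integral_mono_ae (integrableOn_abelIntegral hg).abs hK.integral_norm_prod_left ?_
        filter_upwards [ae_restrict_mem measurableSet_Ioc] with lam hlam
        rw [abelIntegral_eq_integral_Ioc hlam.2, ← Real.norm_eq_abs]
        exact norm_integral_le_integral_norm _
    _ = ∫ ν in Ioc 0 (Real.sqrt b), ∫ lam in Ioc 0 b, ‖g ν / Real.sqrt (lam - ν ^ 2)‖ :=
        integral_integral_swap (f := fun lam ν => ‖g ν / Real.sqrt (lam - ν ^ 2)‖) hK.norm
    _ ≤ ∫ ν in Ioc 0 (Real.sqrt b), 2 * Real.sqrt b * |g ν| :=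
        setIntegral_mono_on hK.integral_norm_prod_right (hg.abs.const_mul _) measurableSet_Ioc
          fun ν hν => (integrableOn_and_integral_norm_div_sqrt_sub_sq_le (g ν) hν).2
    _ = 2 * Real.sqrt b * ∫ ν in Ioc 0 (Real.sqrt b), |g ν| := integral_const_mul _ _

lemma abelIntegral_sub_const {g : ℝ → ℝ} {lam : ℝ} (hlam : 0 < lam) (c : ℝ)
    (hg : IntegrableOn (fun ν => g ν / Real.sqrt (lam - ν ^ 2)) (Ioc 0 (Real.sqrt lam))) :
    abelIntegral (fun ν => g ν - c) lam = abelIntegral g lam - c * (Real.pi / 2) := by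
  obtain ⟨hint, hval⟩ := integrableOn_and_integral_inv_sqrt_sub_sq hlam
  simp only [abelIntegral, sub_div, div_eq_mul_inv c]
  rw [integral_sub hg (hint.const_mul c), integral_const_mul, hval]

lemma integral_abs_inv_pi_mul_abelIntegral_sub_le {f : ℝ → ℝ} {b : ℝ} (α : ℝ)
    (hf : IntegrableOn f (Ioc 0 (Real.sqrt b))) :
    ∫ lam in Ioc 0 b, |Real.pi⁻¹ * abelIntegral f lam - α / 2| ≤
      Real.pi⁻¹ * (2 * Real.sqrt b * ∫ ν in Ioc 0 (Real.sqrt b), |f ν - α|) := by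
  have hg : IntegrableOn (fun ν => f ν - α) (Ioc 0 (Real.sqrt b)) :=
    hf.sub (integrableOn_const measure_Ioc_lt_top.ne)
  have hcentre : ∀ᵐ lam ∂(volume.restrict (Ioc 0 b)),
      |Real.pi⁻¹ * abelIntegral f lam - α / 2| =
        Real.pi⁻¹ * |abelIntegral (fun ν => f ν - α) lam| := by
    filter_upwards [ae_integrableOn_abelIntegrand hf, ae_restrict_mem measurableSet_Ioc]
      with lam hint hlam
    rw [abelIntegral_sub_const hlam.1 α hint, ← abs_of_pos (inv_pos.2 Real.pi_pos), ← abs_mul,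
      abs_of_pos (inv_pos.2 Real.pi_pos)]
    congr 1
    field_simp
  rw [integral_congr_ae hcentre, integral_const_mul]
  exact mul_le_mul_of_nonneg_left (integral_abs_abelIntegral_le hg)
    (inv_nonneg.2 Real.pi_pos.le)

lemma tendsto_sqrt_nhdsGT_zero : Tendsto Real.sqrt (𝓝[>] 0) (𝓝[>] 0) := by
  refine tendsto_nhdsWithin_of_tendsto_nhds_of_eventually_within _ ?_ ?_
  · simpa using (Real.continuous_sqrt.tendsto 0).mono_left nhdsWithin_le_nhds
  · filter_upwards [self_mem_nhdsWithin] with x hx using Real.sqrt_pos.2 hx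

/-- If `f ∈ L¹_loc(ℝ)` and `0` is a right Lebesgue point of `f` with value `α`,
then `Sf(λ) = (1/π) ∫₀^{√λ} f(ν) (λ - ν²)^{-1/2} dν` is locally integrable on `(0,∞)`,
`0` is a right Lebesgue point of `Sf`, and `(Sf)_L(0₊) = α/2`. -/
theorem stmt_0 (f : ℝ → ℝ) (α : ℝ)
    (hf : LocallyIntegrable f)
    (hlp : Tendsto (fun h : ℝ => (1 / h) * ∫ y in Ioc (0 : ℝ) h, |f y - α|)
      (nhdsWithin 0 (Ioi 0)) (nhds 0)) :
    LocallyIntegrableOn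
      (fun lam : ℝ =>
        Real.pi⁻¹ * ∫ ν in Ioc (0 : ℝ) (Real.sqrt lam), f ν / Real.sqrt (lam - ν ^ 2))
      (Ioi 0) ∧
    Tendsto (fun h : ℝ => (1 / h) * ∫ lam in Ioc (0 : ℝ) h,
        |Real.pi⁻¹ * (∫ ν in Ioc (0 : ℝ) (Real.sqrt lam), f ν / Real.sqrt (lam - ν ^ 2))
          - α / 2|)
      (nhdsWithin 0 (Ioi 0)) (nhds 0) := by
  have hfi : ∀ t, IntegrableOn f (Ioc 0 t) := fun t =>
    (hf.integrableOn_isCompact isCompact_Icc).mono_set Ioc_subset_Icc_self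
  refine ⟨fun x hx => ⟨Ioc 0 (x + 1), ?_, (integrableOn_abelIntegral (hfi _)).const_mul _⟩, ?_⟩
  · exact mem_nhdsWithin_of_mem_nhds (mem_of_superset
      (Ioo_mem_nhds (mem_Ioi.1 hx) (lt_add_one x)) Ioo_subset_Ioc_self)
  change Tendsto (fun h => (1 / h) * ∫ lam in Ioc 0 h,
    |Real.pi⁻¹ * abelIntegral f lam - α / 2|) (𝓝[>] 0) (𝓝 0)
  have hbound := (hlp.comp tendsto_sqrt_nhdsGT_zero).const_mul (2 / Real.pi)
  rw [mul_zero] at hbound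
  refine squeeze_zero' ?_ ?_ hbound
  · filter_upwards [self_mem_nhdsWithin] with h hh
    exact mul_nonneg (one_div_nonneg.2 (le_of_lt hh)) (integral_nonneg fun _ => abs_nonneg _)
  · filter_upwards [self_mem_nhdsWithin] with h (hh : 0 < h)
    calc (1 / h) * ∫ lam in Ioc 0 h, |Real.pi⁻¹ * abelIntegral f lam - α / 2|
        ≤ (1 / h) * (Real.pi⁻¹ * (2 * Real.sqrt h *
            ∫ ν in Ioc 0 (Real.sqrt h), |f ν - α|)) :=
          mul_le_mul_of_nonneg_left (integral_abs_inv_pi_mul_abelIntegral_sub_le α (hfi _))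
            (one_div_nonneg.2 hh.le)
      _ = 2 / Real.pi * ((1 / Real.sqrt h) * ∫ ν in Ioc 0 (Real.sqrt h), |f ν - α|) := by
          rw [show 1 / h = 1 / (Real.sqrt h * Real.sqrt h) by rw [Real.mul_self_sqrt hh.le]]
          field_simp
end

section
/- Let f ∈ L¹(ℝ; (1+ν²)^{−3/2} dν) and suppose 0 is a right Lebesgue point of f with value f_L(0₊) = α₊ and a left Lebesgue point of f with value f_L(0₋) = α₋. Then lim_{λ↓0} λ ∫_ℝ f(ν) (ν² + λ)^{−3/2} dν = α₊ + α₋. -/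
/-!
The kernel `λ (ν² + λ)^{-3/2}` is the derivative of `ν / √(ν² + λ)`, so it has mass `1` on
`(0, ∞)`; after reflecting the left half-line and subtracting the limit value, it remains to show
`λ ∫₀^∞ |g(ν)| (ν² + λ)^{-3/2} dν → 0` when `0` is a right Lebesgue point of `g` with value `0`.
Beyond a fixed `δ` the kernel is at most `λ C_δ (1 + ν²)^{-3/2}`, which kills the tail. On `(0, δ]`
the kernel is decreasing, so its superlevel sets are intervals `(0, c)` or `(0, c]`; comparing the
measures `|g| dν` and `ε dν` on these sets and using the layer-cake formula bounds the
`|g|`-weighted integral of the kernel by `ε` times its plain integral, as soon as every average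
of `|g|` over `(0, c]`, `c ≤ δ`, is at most `ε`.
-/

open MeasureTheory Filter Set Topology
open scoped ENNReal

theorem lintegral_ofReal_le_of_measure_lt_le {α : Type*} [MeasurableSpace α] {μ ν : Measure α}
    {K : α → ℝ} (hK : 0 ≤ K) (hKμ : AEMeasurable K μ) (hKν : AEMeasurable K ν)
    (h : ∀ t, 0 < t → μ {x | t < K x} ≤ ν {x | t < K x}) :
    ∫⁻ x, ENNReal.ofReal (K x) ∂μ ≤ ∫⁻ x, ENNReal.ofReal (K x) ∂ν := by
  rw [lintegral_eq_lintegral_meas_lt μ (ae_of_all _ hK) hKμ,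
    lintegral_eq_lintegral_meas_lt ν (ae_of_all _ hK) hKν]
  exact setLIntegral_mono' measurableSet_Ioi h

theorem setLIntegral_le_mul_volume_of_forall_Ioc {G : ℝ → ℝ≥0∞} {δ : ℝ} {ε : ℝ≥0∞}
    (hG : ∀ c ∈ Ioc 0 δ, ∫⁻ x in Ioc 0 c, G x ≤ ε * ENNReal.ofReal c)
    {A : Set ℝ} (hA : A ⊆ Ioc 0 δ) (hdown : ∀ y ∈ A, Ioc 0 y ⊆ A) :
    ∫⁻ x in A, G x ≤ ε * volume A := by
  rcases A.eq_empty_or_nonempty with rfl | hne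
  · simp
  have hbdd : BddAbove A := bddAbove_Ioc.mono hA
  set c := sSup A
  have hAc : A ⊆ Ioc 0 c := fun x hx => ⟨(hA hx).1, le_csSup hbdd hx⟩
  have hcA : Ioo 0 c ⊆ A := fun x hx => by
    obtain ⟨y, hyA, hxy⟩ := exists_lt_of_lt_csSup hne hx.2
    exact hdown y hyA ⟨hx.1, hxy.le⟩
  have hvol : volume A = ENNReal.ofReal c := le_antisymm
    ((measure_mono hAc).trans_eq (by simp [Real.volume_Ioc]))
    (by simpa [Real.volume_Ioo] using measure_mono (μ := volume) hcA)
  obtain ⟨x, hx⟩ := hne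
  have hc : c ∈ Ioc 0 δ :=
    ⟨(hA hx).1.trans_le (le_csSup hbdd hx), csSup_le ⟨x, hx⟩ fun y hy => (hA hy).2⟩
  calc ∫⁻ x in A, G x ≤ ∫⁻ x in Ioc 0 c, G x := lintegral_mono_set hAc
    _ ≤ ε * volume A := hvol ▸ hG c hc

theorem setIntegral_abs_mul_le_of_antitoneOn {g K : ℝ → ℝ} {δ ε : ℝ} (hε : 0 ≤ ε)
    (hg : IntegrableOn g (Ioc 0 δ)) (hK : Measurable K) (hK0 : 0 ≤ K)
    (hKint : IntegrableOn K (Ioc 0 δ)) (hKanti : AntitoneOn K (Ioc 0 δ))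
    (havg : ∀ c ∈ Ioc 0 δ, ∫ x in Ioc 0 c, |g x| ≤ ε * c) :
    ∫ x in Ioc 0 δ, |g x| * K x ≤ ε * ∫ x in Ioc 0 δ, K x := by
  set μ := volume.restrict (Ioc (0:ℝ) δ)
  set G : ℝ → ℝ≥0∞ := fun x => ENNReal.ofReal |g x|
  have hGm : AEMeasurable G μ := hg.abs.aemeasurable.ennreal_ofReal
  have hlevel : ∀ t, 0 < t → μ.withDensity G {x | t < K x} ≤
      (ENNReal.ofReal ε • μ) {x | t < K x} := by
    intro t _
    have hS : MeasurableSet {x | t < K x} := measurableSet_lt measurable_const hK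
    rw [withDensity_apply _ hS, Measure.restrict_restrict hS, Measure.smul_apply,
      Measure.restrict_apply hS, smul_eq_mul]
    refine setLIntegral_le_mul_volume_of_forall_Ioc (fun c hc => ?_) inter_subset_right
      fun y hy x hx => ⟨hy.1.trans_le (hKanti ⟨hx.1, hx.2.trans hy.2.2⟩ hy.2 hx.2),
        hx.1, hx.2.trans hy.2.2⟩
    rw [← ofReal_integral_eq_lintegral_ofReal (hg.mono_set (Ioc_subset_Ioc le_rfl hc.2)).abs
      (ae_of_all _ fun _ => abs_nonneg _), ← ENNReal.ofReal_mul hε]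
    exact ENNReal.ofReal_le_ofReal (havg c hc)
  have key : ∫⁻ x, G x * ENNReal.ofReal (K x) ∂μ ≤
      ENNReal.ofReal ε * ∫⁻ x, ENNReal.ofReal (K x) ∂μ := by
    rw [← smul_eq_mul, ← lintegral_smul_measure]
    calc ∫⁻ x, G x * ENNReal.ofReal (K x) ∂μ = ∫⁻ x, ENNReal.ofReal (K x) ∂μ.withDensity G :=
          (lintegral_withDensity_eq_lintegral_mul₀ hGm hK.ennreal_ofReal.aemeasurable).symm
      _ ≤ _ := lintegral_ofReal_le_of_measure_lt_le hK0 hK.aemeasurable hK.aemeasurable hlevel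
  have hKfin : ∫⁻ x, ENNReal.ofReal (K x) ∂μ = ENNReal.ofReal (∫ x in Ioc 0 δ, K x) :=
    (ofReal_integral_eq_lintegral_ofReal hKint (ae_of_all _ hK0)).symm
  rw [integral_eq_lintegral_of_nonneg_ae (ae_of_all _ fun x => mul_nonneg (abs_nonneg _) (hK0 x))
    (hg.abs.aestronglyMeasurable.mul hK.aestronglyMeasurable)]
  calc (∫⁻ x, ENNReal.ofReal (|g x| * K x) ∂μ).toReal
      = (∫⁻ x, G x * ENNReal.ofReal (K x) ∂μ).toReal := by
        simp_rw [G, ENNReal.ofReal_mul (abs_nonneg _)]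
    _ ≤ (ENNReal.ofReal ε * ∫⁻ x, ENNReal.ofReal (K x) ∂μ).toReal :=
        ENNReal.toReal_mono (by simp [hKfin, ENNReal.mul_eq_top]) key
    _ = ε * ∫ x in Ioc 0 δ, K x := by
        rw [hKfin, ← ENNReal.ofReal_mul hε, ENNReal.toReal_ofReal
          (mul_nonneg hε (integral_nonneg hK0))]

theorem rpow_three_halves_eq_mul_sqrt {x : ℝ} (hx : 0 ≤ x) : x ^ ((3:ℝ)/2) = x * √x := by
  rw [Real.sqrt_eq_rpow, ← Real.rpow_one_add' hx (by norm_num)]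
  norm_num

theorem hasDerivAt_div_sqrt_sq_add {lam : ℝ} (hlam : 0 < lam) (x : ℝ) :
    HasDerivAt (fun x => x / √(x ^ 2 + lam)) (lam / (x ^ 2 + lam) ^ ((3:ℝ)/2)) x := by
  have hpos : 0 < x ^ 2 + lam := by positivity
  have hsqrt : HasDerivAt (fun x => √(x ^ 2 + lam)) (2 * x / (2 * √(x ^ 2 + lam))) x := by
    simpa using ((hasDerivAt_pow 2 x).add_const lam).sqrt hpos.ne'
  have hs : 0 < √(x ^ 2 + lam) := Real.sqrt_pos.2 hpos
  refine ((hasDerivAt_id x).div hsqrt hs.ne').congr_deriv ?_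
  rw [id_eq, rpow_three_halves_eq_mul_sqrt hpos.le]
  field_simp
  rw [Real.sq_sqrt hpos.le]
  ring

theorem tendsto_div_sqrt_sq_add_atTop (lam : ℝ) :
    Tendsto (fun x : ℝ => x / √(x ^ 2 + lam)) atTop (𝓝 1) := by
  have hsq : Tendsto (fun x : ℝ => x ^ 2 + lam) atTop atTop :=
    tendsto_atTop_add_const_right _ _ (tendsto_pow_atTop two_ne_zero)
  have hratio : Tendsto (fun x : ℝ => 1 - lam / (x ^ 2 + lam)) atTop (𝓝 1) := by
    simpa using tendsto_const_nhds.sub (tendsto_const_nhds.div_atTop hsq)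
  have hsqrt := hratio.sqrt
  rw [Real.sqrt_one] at hsqrt
  refine hsqrt.congr' ?_
  filter_upwards [eventually_ge_atTop 0, hsq.eventually_gt_atTop 0] with x hx hpos
  rw [one_sub_div hpos.ne', add_sub_cancel_right, Real.sqrt_div' _ hpos.le, Real.sqrt_sq hx]

theorem integral_Ioi_div_rpow_sq_add {lam : ℝ} (hlam : 0 < lam) :
    ∫ ν in Ioi (0:ℝ), lam / (ν ^ 2 + lam) ^ ((3:ℝ)/2) = 1 := by
  simpa using integral_Ioi_of_hasDerivAt_of_nonneg' (a := 0)
    (fun x _ => hasDerivAt_div_sqrt_sq_add hlam x) (fun x _ => by positivity)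
    (tendsto_div_sqrt_sq_add_atTop lam)

theorem integrableOn_Ioi_div_rpow_sq_add {lam : ℝ} (hlam : 0 < lam) :
    IntegrableOn (fun ν => lam / (ν ^ 2 + lam) ^ ((3:ℝ)/2)) (Ioi 0) :=
  integrableOn_Ioi_deriv_of_nonneg' (fun x _ => hasDerivAt_div_sqrt_sq_add hlam x)
    (fun x _ => by positivity) (tendsto_div_sqrt_sq_add_atTop lam)

theorem div_rpow_le_div_rpow_div {a x y c p : ℝ} (ha : 0 < a) (hx : 0 < x) (hc : 0 ≤ c)
    (hp : 0 ≤ p) (h : a * x ≤ y) : c / y ^ p ≤ c / x ^ p / a ^ p := by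
  rw [div_div, ← Real.mul_rpow hx.le ha.le, mul_comm x]
  exact div_le_div_of_nonneg_left hc (by positivity) (Real.rpow_le_rpow (by positivity) h hp)

theorem IntegrableOn.div_rpow_sq_add {g : ℝ → ℝ} {s : Set ℝ}
    (hg : IntegrableOn (fun ν => g ν / (1 + ν ^ 2) ^ ((3:ℝ)/2)) s) {lam : ℝ} (hlam : 0 < lam) :
    IntegrableOn (fun ν => g ν / (ν ^ 2 + lam) ^ ((3:ℝ)/2)) s := by
  have hcont : Continuous fun ν : ℝ => (1 + ν ^ 2) ^ ((3:ℝ)/2) / (ν ^ 2 + lam) ^ ((3:ℝ)/2) := by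
    fun_prop (disch := intros; positivity)
  refine (hg.bdd_mul (c := 1 / (min 1 lam) ^ ((3:ℝ)/2)) hcont.aestronglyMeasurable
    (ae_of_all _ fun ν => ?_)).congr (ae_of_all _ fun ν => ?_)
  · have hw : 0 < (1 + ν ^ 2) ^ ((3:ℝ)/2) := by positivity
    have hD : 0 < (ν ^ 2 + lam) ^ ((3:ℝ)/2) := by positivity
    have hmin : min 1 lam * (1 + ν ^ 2) ≤ ν ^ 2 + lam := by
      nlinarith [min_le_left 1 lam, min_le_right 1 lam, sq_nonneg ν]
    have hle := div_rpow_le_div_rpow_div (p := (3:ℝ)/2) (lt_min one_pos hlam) (by positivity) hw.le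
      (by norm_num) hmin
    rwa [div_self hw.ne', ← Real.norm_of_nonneg (div_nonneg hw.le hD.le)] at hle
  · have hw : 0 < (1 + ν ^ 2) ^ ((3:ℝ)/2) := by positivity
    field_simp

theorem IntegrableOn.of_div_rpow_one_add_sq {g : ℝ → ℝ} {a b : ℝ}
    (hg : IntegrableOn (fun ν => g ν / (1 + ν ^ 2) ^ ((3:ℝ)/2)) (Ioc a b)) :
    IntegrableOn g (Ioc a b) := by
  have hw : Continuous fun ν : ℝ => (1 + ν ^ 2) ^ ((3:ℝ)/2) := by
    fun_prop (disch := intros; positivity)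
  exact (hg.mul_continuousOn_of_subset hw.continuousOn measurableSet_Ioc isCompact_Icc
    Ioc_subset_Icc_self).congr_fun (fun ν _ => div_mul_cancel₀ _ (by positivity)) measurableSet_Ioc

theorem mul_setIntegral_Ioc_abs_div_rpow_le {g : ℝ → ℝ} {δ ε lam : ℝ}
    (hg : IntegrableOn g (Ioc 0 δ)) (hε : 0 ≤ ε) (hlam : 0 < lam)
    (havg : ∀ c ∈ Ioc 0 δ, ∫ x in Ioc 0 c, |g x| ≤ ε * c) :
    lam * ∫ ν in Ioc 0 δ, |g ν| / (ν ^ 2 + lam) ^ ((3:ℝ)/2) ≤ ε := by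
  have hK := integrableOn_Ioi_div_rpow_sq_add hlam
  have hanti : AntitoneOn (fun ν => lam / (ν ^ 2 + lam) ^ ((3:ℝ)/2)) (Ioc 0 δ) :=
    fun x hx y _ hxy => by dsimp only; have := hx.1.le; gcongr
  calc lam * ∫ ν in Ioc 0 δ, |g ν| / (ν ^ 2 + lam) ^ ((3:ℝ)/2)
      = ∫ ν in Ioc 0 δ, |g ν| * (lam / (ν ^ 2 + lam) ^ ((3:ℝ)/2)) := by
        rw [← integral_const_mul]; simp_rw [mul_div_left_comm lam]
    _ ≤ ε * ∫ ν in Ioc 0 δ, lam / (ν ^ 2 + lam) ^ ((3:ℝ)/2) :=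
        setIntegral_abs_mul_le_of_antitoneOn hε hg (by fun_prop) (fun ν => by positivity)
          (hK.mono_set Ioc_subset_Ioi_self) hanti havg
    _ ≤ ε * ∫ ν in Ioi 0, lam / (ν ^ 2 + lam) ^ ((3:ℝ)/2) :=
        mul_le_mul_of_nonneg_left (setIntegral_mono_set hK (ae_of_all _ fun ν => by positivity)
          Ioc_subset_Ioi_self.eventuallyLE) hε
    _ = ε := by rw [integral_Ioi_div_rpow_sq_add hlam, mul_one]

theorem setIntegral_Ioi_abs_div_rpow_le {g : ℝ → ℝ} {δ lam : ℝ} (hδ : 0 < δ) (hlam : 0 < lam)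
    (hg : IntegrableOn (fun ν => |g ν| / (1 + ν ^ 2) ^ ((3:ℝ)/2)) (Ioi δ)) :
    ∫ ν in Ioi δ, |g ν| / (ν ^ 2 + lam) ^ ((3:ℝ)/2) ≤
      (∫ ν in Ioi δ, |g ν| / (1 + ν ^ 2) ^ ((3:ℝ)/2)) / (δ ^ 2 / (1 + δ ^ 2)) ^ ((3:ℝ)/2) := by
  rw [← integral_div]
  refine setIntegral_mono_on (IntegrableOn.div_rpow_sq_add hg hlam) (hg.div_const _)
    measurableSet_Ioi fun ν hν => div_rpow_le_div_rpow_div (by positivity) (by positivity)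
      (abs_nonneg _) (by norm_num) ?_
  have : δ ^ 2 ≤ ν ^ 2 := by nlinarith [mem_Ioi.1 hν]
  rw [div_mul_eq_mul_div, div_le_iff₀ (by positivity)]
  nlinarith

theorem mul_setIntegral_Ioi_abs_div_rpow_le {g : ℝ → ℝ}
    (hg : IntegrableOn (fun ν => g ν / (1 + ν ^ 2) ^ ((3:ℝ)/2)) (Ioi 0)) {δ ε lam : ℝ}
    (hδ : 0 < δ) (hε : 0 ≤ ε) (hlam : 0 < lam)
    (havg : ∀ c ∈ Ioc 0 δ, ∫ x in Ioc 0 c, |g x| ≤ ε * c) :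
    lam * ∫ ν in Ioi 0, |g ν| / (ν ^ 2 + lam) ^ ((3:ℝ)/2) ≤
      ε + lam * ((∫ ν in Ioi δ, |g ν| / (1 + ν ^ 2) ^ ((3:ℝ)/2)) /
        (δ ^ 2 / (1 + δ ^ 2)) ^ ((3:ℝ)/2)) := by
  have hgabs : IntegrableOn (fun ν => |g ν| / (1 + ν ^ 2) ^ ((3:ℝ)/2)) (Ioi 0) :=
    hg.abs.congr (ae_of_all _ fun ν => by simp only [abs_div, abs_of_pos (by positivity :
      (0:ℝ) < (1 + ν ^ 2) ^ ((3:ℝ)/2))])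
  have hgD := IntegrableOn.div_rpow_sq_add hgabs hlam
  have hsplit : ∫ ν in Ioi 0, |g ν| / (ν ^ 2 + lam) ^ ((3:ℝ)/2) =
      (∫ ν in Ioc 0 δ, |g ν| / (ν ^ 2 + lam) ^ ((3:ℝ)/2)) +
        ∫ ν in Ioi δ, |g ν| / (ν ^ 2 + lam) ^ ((3:ℝ)/2) := by
    rw [← setIntegral_union (Ioc_disjoint_Ioi le_rfl) measurableSet_Ioi
      (hgD.mono_set Ioc_subset_Ioi_self) (hgD.mono_set (Ioi_subset_Ioi hδ.le)),
      Ioc_union_Ioi_eq_Ioi hδ.le]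
  have hgloc : IntegrableOn g (Ioc 0 δ) :=
    IntegrableOn.of_div_rpow_one_add_sq (hg.mono_set Ioc_subset_Ioi_self)
  rw [hsplit, mul_add]
  gcongr
  · exact mul_setIntegral_Ioc_abs_div_rpow_le hgloc hε hlam havg
  · exact setIntegral_Ioi_abs_div_rpow_le hδ hlam (hgabs.mono_set (Ioi_subset_Ioi hδ.le))

theorem tendsto_mul_setIntegral_Ioi_abs_div_rpow {g : ℝ → ℝ}
    (hg : IntegrableOn (fun ν => g ν / (1 + ν ^ 2) ^ ((3:ℝ)/2)) (Ioi 0))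
    (hlp : Tendsto (fun h => (1 / h) * ∫ y in Ioc 0 h, |g y|) (𝓝[>] 0) (𝓝 0)) :
    Tendsto (fun lam => lam * ∫ ν in Ioi 0, |g ν| / (ν ^ 2 + lam) ^ ((3:ℝ)/2))
      (𝓝[>] 0) (𝓝 0) := by
  refine tendsto_order.2 ⟨fun a ha => eventually_nhdsWithin_of_forall fun lam (hlam : 0 < lam) =>
    ha.trans_le (mul_nonneg hlam.le (integral_nonneg fun ν => by positivity)),
    fun ε hε => ?_⟩
  obtain ⟨δ, hδ, hsub⟩ :=
    mem_nhdsGT_iff_exists_Ioc_subset.1 (hlp (Iio_mem_nhds (half_pos hε)))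
  have havg : ∀ c ∈ Ioc 0 δ, ∫ x in Ioc 0 c, |g x| ≤ ε / 2 * c := fun c hc => by
    have : (1 / c) * ∫ x in Ioc 0 c, |g x| < ε / 2 := hsub hc
    rw [one_div, inv_mul_lt_iff₀ hc.1] at this
    linarith
  set C := (∫ ν in Ioi δ, |g ν| / (1 + ν ^ 2) ^ ((3:ℝ)/2)) / (δ ^ 2 / (1 + δ ^ 2)) ^ ((3:ℝ)/2)
  have hC : Tendsto (fun lam : ℝ => lam * C) (𝓝[>] 0) (𝓝 0) := by
    simpa using (tendsto_id.mul_const C).mono_left (nhdsWithin_le_nhds (a := (0:ℝ)))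
  filter_upwards [self_mem_nhdsWithin, hC.eventually (gt_mem_nhds (half_pos hε))]
    with lam hlam hsmall
  linarith [mul_setIntegral_Ioi_abs_div_rpow_le hg hδ (half_pos hε).le hlam havg]

theorem tendsto_mul_setIntegral_Ioi_div_rpow {f : ℝ → ℝ} {α : ℝ}
    (hf : IntegrableOn (fun ν => f ν / (1 + ν ^ 2) ^ ((3:ℝ)/2)) (Ioi 0))
    (hlp : Tendsto (fun h => (1 / h) * ∫ y in Ioc 0 h, |f y - α|) (𝓝[>] 0) (𝓝 0)) :
    Tendsto (fun lam => lam * ∫ ν in Ioi 0, f ν / (ν ^ 2 + lam) ^ ((3:ℝ)/2))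
      (𝓝[>] 0) (𝓝 α) := by
  have hα : IntegrableOn (fun ν : ℝ => α / (1 + ν ^ 2) ^ ((3:ℝ)/2)) (Ioi 0) :=
    ((integrableOn_Ioi_div_rpow_sq_add one_pos).const_mul α).congr
      (ae_of_all _ fun ν => by simp only [add_comm, mul_one_div])
  have hfα : IntegrableOn (fun ν => (f ν - α) / (1 + ν ^ 2) ^ ((3:ℝ)/2)) (Ioi 0) :=
    (hf.sub hα).congr (ae_of_all _ fun ν => (sub_div _ _ _).symm)
  rw [tendsto_iff_norm_sub_tendsto_zero]
  refine squeeze_zero_norm' ?_ (tendsto_mul_setIntegral_Ioi_abs_div_rpow hfα hlp)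
  filter_upwards [self_mem_nhdsWithin] with lam (hlam : 0 < lam)
  have hmass : lam * ∫ ν in Ioi 0, α / (ν ^ 2 + lam) ^ ((3:ℝ)/2) = α := by
    rw [← integral_const_mul]
    simp_rw [mul_div_left_comm lam α]
    rw [integral_const_mul, integral_Ioi_div_rpow_sq_add hlam, mul_one]
  have hcentre : lam * (∫ ν in Ioi 0, f ν / (ν ^ 2 + lam) ^ ((3:ℝ)/2)) - α =
      lam * ∫ ν in Ioi 0, (f ν - α) / (ν ^ 2 + lam) ^ ((3:ℝ)/2) := by
    simp_rw [sub_div]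
    rw [integral_sub (IntegrableOn.div_rpow_sq_add hf hlam)
      (IntegrableOn.div_rpow_sq_add hα hlam), mul_sub, hmass]
  rw [hcentre, norm_mul, Real.norm_of_nonneg hlam.le, Real.norm_of_nonneg (by positivity)]
  refine mul_le_mul_of_nonneg_left ((norm_integral_le_integral_norm _).trans_eq ?_) hlam.le
  refine integral_congr_ae (ae_of_all _ fun ν => ?_)
  simp only [Real.norm_eq_abs, abs_div, abs_of_pos (by positivity :
    (0:ℝ) < (ν ^ 2 + lam) ^ ((3:ℝ)/2))]

theorem setIntegral_Ioc_comp_neg {E : Type*} [NormedAddCommGroup E] [NormedSpace ℝ E]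
    (f : ℝ → E) (a b : ℝ) : ∫ x in Ioc a b, f (-x) = ∫ x in Ico (-b) (-a), f x := by
  have hneg : MeasurableEmbedding fun x : ℝ => -x := (Homeomorph.neg ℝ).measurableEmbedding
  have := hneg.setIntegral_map (μ := volume) f (Ico (-b) (-a))
  rw [Measure.map_neg_eq_self] at this
  simpa using this.symm

/-- If `f ∈ L¹(ℝ; (1+ν²)^{-3/2} dν)` and `0` is a right Lebesgue point of `f`
with value `αp` and a left Lebesgue point with value `αm`, then
`λ ∫_ℝ f(ν) (ν² + λ)^{-3/2} dν → αp + αm` as `λ ↓ 0`. -/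
theorem stmt_1 (f : ℝ → ℝ) (αp αm : ℝ)
    (hf : Integrable (fun ν : ℝ => f ν / (1 + ν ^ 2) ^ ((3 : ℝ) / 2)))
    (hrlp : Tendsto (fun h : ℝ => (1 / h) * ∫ y in Ioc (0 : ℝ) h, |f y - αp|)
      (nhdsWithin 0 (Ioi 0)) (nhds 0))
    (hllp : Tendsto (fun h : ℝ => (1 / h) * ∫ y in Ico (-h) (0 : ℝ), |f y - αm|)
      (nhdsWithin 0 (Ioi 0)) (nhds 0)) :
    Tendsto (fun lam : ℝ => lam * ∫ ν : ℝ, f ν / (ν ^ 2 + lam) ^ ((3 : ℝ) / 2))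
      (nhdsWithin 0 (Ioi 0)) (nhds (αp + αm)) := by
  have hf_neg : IntegrableOn (fun ν => f (-ν) / (1 + ν ^ 2) ^ ((3:ℝ)/2)) (Ioi 0) :=
    (hf.comp_neg.congr (ae_of_all _ fun ν => by simp only [neg_sq])).integrableOn
  have hllp_neg : Tendsto (fun h => (1 / h) * ∫ y in Ioc 0 h, |f (-y) - αm|) (𝓝[>] 0) (𝓝 0) := by
    simpa only [setIntegral_Ioc_comp_neg (fun y => |f y - αm|), neg_zero] using hllp
  refine ((tendsto_mul_setIntegral_Ioi_div_rpow hf.integrableOn hrlp).add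
    (tendsto_mul_setIntegral_Ioi_div_rpow hf_neg hllp_neg)).congr' ?_
  filter_upwards [self_mem_nhdsWithin] with lam (hlam : 0 < lam)
  have hfD : Integrable (fun ν => f ν / (ν ^ 2 + lam) ^ ((3:ℝ)/2)) := by
    simpa using IntegrableOn.div_rpow_sq_add (s := univ) (by simpa using hf) hlam
  have hreflect : ∫ ν in Ioi 0, f (-ν) / (ν ^ 2 + lam) ^ ((3:ℝ)/2) =
      ∫ ν in Iic 0, f ν / (ν ^ 2 + lam) ^ ((3:ℝ)/2) := by
    rw [← neg_zero, ← integral_comp_neg_Ioi (0:ℝ) fun ν => f ν / (ν ^ 2 + lam) ^ ((3:ℝ)/2)]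
    simp only [neg_sq, neg_zero]
  rw [hreflect, ← mul_add, add_comm,
    intervalIntegral.integral_Iic_add_Ioi hfD.integrableOn hfD.integrableOn]
end

section
/- Let ξ : (0,∞) → ℝ be measurable with ∫₀^∞ |ξ(s)| (s+1)^{−1} ds < ∞, and suppose 0 is a right Lebesgue point of ξ with value ξ_L(0₊) = L. Then for every φ ∈ (0, π/2), z ∫₀^∞ ξ(s) e^{−zs} ds → L as |z| → ∞ with z ranging over the sector S_φ = {z ∈ ℂ \ {0} : |arg z| < φ}. -/
/-!
Since `∫₀^∞ e^{-zs} ds = 1/z`, we have `z ∫ ξ(s) e^{-zs} ds - L = z ∫ (ξ(s) - L) e^{-zs} ds`, and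
in the sector `|z| ≤ Re z / cos φ`; so it suffices that `x ∫₀^∞ g(s) e^{-xs} ds → 0` for
`g = |ξ - L|` as the real number `x` tends to `∞`. Near `0`, writing `e^{-xs} = ∫_s^∞ x e^{-xt} dt`
and swapping the integrals gives `x ∫₀^δ g(s) e^{-xs} ds = x² ∫₀^∞ e^{-xt} G(t) dt` with
`G(t) = ∫₀^{min(t,δ)} g`, and the Lebesgue point condition `G(t) ≤ ε t` bounds this by `ε`.
Beyond `δ` the factor `e^{-(x-1)δ}` kills the growth of `x`.
-/

open MeasureTheory Filter Set Real Topology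
open scoped ENNReal

lemma integrableOn_mul_exp_neg_mul_of_one_le {f : ℝ → ℝ}
    (hf : IntegrableOn (fun s => f s * exp (-s)) (Ioi 0)) {x : ℝ} (hx : 1 ≤ x) :
    IntegrableOn (fun s => f s * exp (-(x * s))) (Ioi 0) := by
  refine IntegrableOn.congr_fun (hf.mul_bdd (g := fun s => exp (-((x - 1) * s))) (c := 1)
    (by fun_prop) ?_) (fun s _ => ?_) measurableSet_Ioi
  · filter_upwards [ae_restrict_mem measurableSet_Ioi] with s hs
    rw [norm_of_nonneg (exp_pos _).le, exp_le_one_iff]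
    nlinarith [mem_Ioi.1 hs]
  · simp only [mul_assoc, ← exp_add]; ring_nf

lemma integrableOn_Ioc_of_mul_exp_neg {f : ℝ → ℝ}
    (hf : IntegrableOn (fun s => f s * exp (-s)) (Ioi 0)) (δ : ℝ) : IntegrableOn f (Ioc 0 δ) := by
  refine IntegrableOn.congr_fun ((hf.mono_set Ioc_subset_Ioi_self).mul_bdd (g := exp) (c := exp δ)
    (by fun_prop) ?_) (fun s _ => ?_) measurableSet_Ioc
  · filter_upwards [ae_restrict_mem measurableSet_Ioc] with s hs
    rw [norm_of_nonneg (exp_pos _).le, exp_le_exp]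
    exact hs.2
  · simp [mul_assoc, ← exp_add]

lemma integrableOn_abs_sub_mul_exp_neg {ξ : ℝ → ℝ} (hξ : Measurable ξ)
    (hint : IntegrableOn (fun s => |ξ s| / (s + 1)) (Ioi 0)) (L : ℝ) :
    IntegrableOn (fun s => |ξ s - L| * exp (-s)) (Ioi 0) := by
  refine (hint.add ((integrableOn_exp_neg_Ioi 0).const_mul |L|)).mono' (by fun_prop) ?_
  filter_upwards [ae_restrict_mem measurableSet_Ioi] with s hs
  have hexp : exp (-s) ≤ (s + 1)⁻¹ := by
    rw [exp_neg]
    exact inv_anti₀ (by linarith [mem_Ioi.1 hs]) (add_one_le_exp s)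
  rw [norm_of_nonneg (by positivity)]
  calc |ξ s - L| * exp (-s) ≤ (|ξ s| + |L|) * exp (-s) := by gcongr; exact abs_sub _ _
    _ ≤ |ξ s| / (s + 1) + |L| * exp (-s) := by rw [add_mul, div_eq_mul_inv]; gcongr

lemma ofReal_exp_neg_mul_eq_lintegral_Ioi {x : ℝ} (hx : 0 < x) (s : ℝ) :
    ENNReal.ofReal (exp (-(x * s))) = ∫⁻ t in Ioi s, ENNReal.ofReal (x * exp (-(x * t))) := by
  have hint : IntegrableOn (fun t => exp (-x * t)) (Ioi s) :=
    integrableOn_exp_mul_Ioi (neg_neg_of_pos hx) s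
  rw [← ofReal_integral_eq_lintegral_ofReal]
  · simp_rw [← neg_mul]
    rw [integral_const_mul, integral_exp_mul_Ioi (neg_neg_of_pos hx)]
    field_simp
  · simpa only [neg_mul] using hint.const_mul x
  · filter_upwards with t using by positivity

lemma integral_mul_exp_neg_mul_Ioi {x : ℝ} (hx : 0 < x) :
    ∫ t in Ioi (0 : ℝ), t * exp (-(x * t)) = (x ^ 2)⁻¹ := by
  have := integral_rpow_mul_exp_neg_mul_Ioi two_pos hx
  norm_num [Real.Gamma_two] at this
  exact this

lemma integrableOn_mul_exp_neg_mul_Ioi {x : ℝ} (hx : 0 < x) :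
    IntegrableOn (fun t => t * exp (-(x * t))) (Ioi 0) := by
  simpa using integrableOn_rpow_mul_exp_neg_mul_rpow (s := 1) (p := 1) (by norm_num) one_pos hx

lemma setLIntegral_Iio_inter_Ioc_le {g : ℝ → ℝ≥0∞} {ε δ : ℝ} (hε : 0 ≤ ε)
    (hG : ∀ h ∈ Ioc 0 δ, ∫⁻ s in Ioc 0 h, g s ≤ ENNReal.ofReal (ε * h)) (t : ℝ) :
    ∫⁻ s in Iio t ∩ Ioc 0 δ, g s ≤ (Ioi (0 : ℝ)).indicator (fun t => ENNReal.ofReal (ε * t)) t := by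
  have hsub : Iio t ∩ Ioc 0 δ ⊆ Ioc 0 (min t δ) := fun s ⟨hst, hs0, hsδ⟩ =>
    ⟨hs0, le_min hst.le hsδ⟩
  rcases le_or_gt (min t δ) 0 with hm | hm
  · simp [subset_empty_iff.mp (Ioc_eq_empty_of_le hm ▸ hsub)]
  · have ht : 0 < t := hm.trans_le (min_le_left _ _)
    calc ∫⁻ s in Iio t ∩ Ioc 0 δ, g s ≤ ∫⁻ s in Ioc 0 (min t δ), g s := lintegral_mono_set hsub
      _ ≤ ENNReal.ofReal (ε * min t δ) := hG _ ⟨hm, min_le_right _ _⟩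
      _ ≤ _ := by
        rw [indicator_of_mem (show t ∈ Ioi (0 : ℝ) from ht)]
        gcongr
        exact min_le_left t δ

lemma measurable_uncurry_indicator_Iio_mul {f g : ℝ → ℝ≥0∞} (hf : Measurable f)
    (hg : Measurable g) : Measurable (Function.uncurry fun s t => (Iio t).indicator f s * g t) := by
  have : (Function.uncurry fun s t => (Iio t).indicator f s * g t) =
      fun p : ℝ × ℝ => {p : ℝ × ℝ | p.1 < p.2}.indicator (fun p => f p.1) p * g p.2 := by
    ext ⟨s, t⟩; simp [indicator]
  rw [this]
  exact ((hf.comp measurable_fst).indicator (measurableSet_lt measurable_fst measurable_snd)).mul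
    (hg.comp measurable_snd)

lemma lintegral_Ioc_mul_exp_neg_mul_le {g : ℝ → ℝ≥0∞} (hg : Measurable g) {ε δ x : ℝ}
    (hε : 0 ≤ ε) (hx : 0 < x)
    (hG : ∀ h ∈ Ioc 0 δ, ∫⁻ s in Ioc 0 h, g s ≤ ENNReal.ofReal (ε * h)) :
    ∫⁻ s in Ioc 0 δ, g s * ENNReal.ofReal (exp (-(x * s))) ≤ ENNReal.ofReal (ε / x) := by
  set k : ℝ → ℝ≥0∞ := fun t => ENNReal.ofReal (x * exp (-(x * t)))
  calc ∫⁻ s in Ioc 0 δ, g s * ENNReal.ofReal (exp (-(x * s)))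
      = ∫⁻ s in Ioc 0 δ, ∫⁻ t, (Iio t).indicator g s * k t := by
        refine setLIntegral_congr_fun measurableSet_Ioc fun s _ => ?_
        rw [ofReal_exp_neg_mul_eq_lintegral_Ioi hx, ← lintegral_const_mul _ (by fun_prop),
          ← lintegral_indicator measurableSet_Ioi]
        congr 1; ext t
        by_cases hst : s < t <;> simp [hst, indicator, k]
    _ = ∫⁻ t, ∫⁻ s in Ioc 0 δ, (Iio t).indicator g s * k t :=
        lintegral_lintegral_swap
          (measurable_uncurry_indicator_Iio_mul hg (by fun_prop)).aemeasurable
    _ = ∫⁻ t, k t * ∫⁻ s in Iio t ∩ Ioc 0 δ, g s := by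
        congr 1; ext t
        rw [lintegral_mul_const _ (hg.indicator measurableSet_Iio), mul_comm,
          lintegral_indicator measurableSet_Iio, Measure.restrict_restrict measurableSet_Iio]
    _ ≤ ∫⁻ t, k t * (Ioi (0 : ℝ)).indicator (fun t => ENNReal.ofReal (ε * t)) t := by
        gcongr with t; exact setLIntegral_Iio_inter_Ioc_le hε hG t
    _ = ∫⁻ t in Ioi 0, ENNReal.ofReal (ε * x * (t * exp (-(x * t)))) := by
        rw [← lintegral_indicator measurableSet_Ioi]
        congr 1; ext t
        by_cases ht : 0 < t
        · have hk : 0 ≤ x * exp (-(x * t)) := by positivity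
          simp only [ht, indicator_of_mem, mem_Ioi, k, ← ENNReal.ofReal_mul hk]
          ring_nf
        · simp [ht]
    _ = ENNReal.ofReal (ε / x) := by
        rw [← ofReal_integral_eq_lintegral_ofReal, integral_const_mul,
          integral_mul_exp_neg_mul_Ioi hx]
        · congr 1; field_simp
        · exact (integrableOn_mul_exp_neg_mul_Ioi hx).const_mul _
        · filter_upwards [ae_restrict_mem measurableSet_Ioi] with t ht
          have : 0 < t := ht
          positivity

lemma mul_setIntegral_Ioc_mul_exp_neg_mul_le {g : ℝ → ℝ} (hg0 : ∀ s, 0 ≤ g s) (hgm : Measurable g)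
    {ε δ x : ℝ} (hε : 0 ≤ ε) (hx : 0 < x) (hgi : IntegrableOn g (Ioc 0 δ))
    (hG : ∀ h ∈ Ioc 0 δ, ∫ s in Ioc 0 h, g s ≤ ε * h) :
    x * ∫ s in Ioc 0 δ, g s * exp (-(x * s)) ≤ ε := by
  have hI : ∫ s in Ioc 0 δ, g s * exp (-(x * s)) ≤ ε / x := by
    rw [integral_eq_lintegral_of_nonneg_ae
      (Eventually.of_forall fun s => mul_nonneg (hg0 s) (exp_pos _).le) (by fun_prop)]
    refine ENNReal.toReal_le_of_le_ofReal (by positivity) ?_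
    simp_rw [ENNReal.ofReal_mul (hg0 _)]
    refine lintegral_Ioc_mul_exp_neg_mul_le hgm.ennreal_ofReal hε hx fun h hh => ?_
    rw [← ofReal_integral_eq_lintegral_ofReal (hgi.mono_set (Ioc_subset_Ioc_right hh.2))
      (Eventually.of_forall hg0)]
    exact ENNReal.ofReal_le_ofReal (hG h hh)
  calc x * ∫ s in Ioc 0 δ, g s * exp (-(x * s)) ≤ x * (ε / x) := by gcongr
    _ = ε := by field_simp

lemma setIntegral_Ioi_mul_exp_neg_mul_le {g : ℝ → ℝ} (hg0 : ∀ s, 0 ≤ g s)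
    (hint : IntegrableOn (fun s => g s * exp (-s)) (Ioi 0)) {δ x : ℝ} (hδ : 0 ≤ δ) (hx : 1 ≤ x) :
    ∫ s in Ioi δ, g s * exp (-(x * s)) ≤ exp (-((x - 1) * δ)) * ∫ s in Ioi δ, g s * exp (-s) := by
  rw [← integral_const_mul]
  refine setIntegral_mono_on
    ((integrableOn_mul_exp_neg_mul_of_one_le hint hx).mono_set (Ioi_subset_Ioi hδ))
    ((hint.mono_set (Ioi_subset_Ioi hδ)).const_mul _) measurableSet_Ioi fun s hs => ?_
  have hsplit : exp (-(x * s)) = exp (-((x - 1) * s)) * exp (-s) := by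
    rw [← exp_add]; ring_nf
  rw [hsplit, mul_left_comm]
  gcongr
  · exact mul_nonneg (hg0 s) (exp_pos _).le
  · nlinarith [mem_Ioi.1 hs]

theorem tendsto_mul_integral_mul_exp_neg_mul_atTop {g : ℝ → ℝ} (hg0 : ∀ s, 0 ≤ g s)
    (hgm : Measurable g) (hint : IntegrableOn (fun s => g s * exp (-s)) (Ioi 0))
    (hlp : Tendsto (fun h => (1 / h) * ∫ s in Ioc 0 h, g s) (𝓝[>] 0) (𝓝 0)) :
    Tendsto (fun x => x * ∫ s in Ioi 0, g s * exp (-(x * s))) atTop (𝓝 0) := by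
  refine Metric.tendsto_nhds.2 fun ε hε => ?_
  obtain ⟨δ, hδ, hsub⟩ := mem_nhdsGT_iff_exists_Ioc_subset.1
    (hlp.eventually (gt_mem_nhds (half_pos hε)))
  have hG : ∀ h ∈ Ioc 0 δ, ∫ s in Ioc 0 h, g s ≤ ε / 2 * h := fun h hh => by
    have : 1 / h * ∫ s in Ioc 0 h, g s < ε / 2 := hsub hh
    rw [one_div_mul_eq_div, div_lt_iff₀ hh.1] at this
    exact this.le
  set K := ∫ s in Ioi δ, g s * exp (-s)
  have htail : Tendsto (fun x => x * exp (-((x - 1) * δ)) * K) atTop (𝓝 0) := by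
    have := ((tendsto_rpow_mul_exp_neg_mul_atTop_nhds_zero 1 δ hδ).const_mul (exp δ)).mul_const K
    simp only [rpow_one, mul_zero, zero_mul] at this
    refine this.congr fun x => ?_
    rw [sub_mul, neg_sub, one_mul, sub_eq_add_neg, exp_add, show -δ * x = -(x * δ) by ring]
    ring
  filter_upwards [htail.eventually (gt_mem_nhds (half_pos hε)), eventually_ge_atTop 1]
    with x htail_lt hx
  have hx0 : 0 < x := one_pos.trans_le hx
  have hgx := integrableOn_mul_exp_neg_mul_of_one_le hint hx
  have hnear := mul_setIntegral_Ioc_mul_exp_neg_mul_le hg0 hgm (half_pos hε).le hx0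
    (integrableOn_Ioc_of_mul_exp_neg hint δ) hG
  have hfar := mul_le_mul_of_nonneg_left (setIntegral_Ioi_mul_exp_neg_mul_le hg0 hint hδ.le hx)
    hx0.le
  have hnonneg : 0 ≤ x * ∫ s in Ioi 0, g s * exp (-(x * s)) :=
    mul_nonneg hx0.le (setIntegral_nonneg measurableSet_Ioi fun s _ =>
      mul_nonneg (hg0 s) (exp_pos _).le)
  rw [dist_zero_right, norm_of_nonneg hnonneg, ← Ioc_union_Ioi_eq_Ioi hδ.le,
    setIntegral_union (Ioc_disjoint_Ioi le_rfl) measurableSet_Ioi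
      (hgx.mono_set Ioc_subset_Ioi_self) (hgx.mono_set (Ioi_subset_Ioi hδ.le)), mul_add]
  rw [← mul_assoc] at hfar
  linarith

lemma norm_mul_integral_ofReal_mul_cexp_sub_le {ξ : ℝ → ℝ} (hξ : Measurable ξ) (L : ℝ) {z : ℂ}
    (hz : 0 < z.re) (hint : IntegrableOn (fun s => |ξ s - L| * exp (-(z.re * s))) (Ioi 0)) :
    ‖z * (∫ s in Ioi (0 : ℝ), (ξ s : ℂ) * Complex.exp (-(z * s))) - L‖ ≤
      ‖z‖ * ∫ s in Ioi (0 : ℝ), |ξ s - L| * exp (-(z.re * s)) := by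
  have hnorm : ∀ s : ℝ, ‖((ξ s - L : ℝ) : ℂ) * Complex.exp (-(z * s))‖ =
      |ξ s - L| * exp (-(z.re * s)) := fun s => by
    rw [norm_mul, Complex.norm_real, Complex.norm_exp, norm_eq_abs]
    simp
  have hint' : IntegrableOn (fun s : ℝ => ((ξ s - L : ℝ) : ℂ) * Complex.exp (-(z * s))) (Ioi 0) :=
    hint.mono' (by fun_prop) (Eventually.of_forall fun s => (hnorm s).le)
  have hexp : IntegrableOn (fun s : ℝ => Complex.exp (-(z * s))) (Ioi 0) := by
    simpa [neg_mul] using integrableOn_exp_mul_complex_Ioi (a := -z) (by simpa using hz) 0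
  have hexp_int : ∫ s in Ioi (0 : ℝ), Complex.exp (-(z * s)) = z⁻¹ := by
    have := integral_exp_mul_complex_Ioi (a := -z) (by simpa using hz) 0
    simp only [neg_mul, Complex.ofReal_zero, mul_zero, Complex.exp_zero] at this
    rw [this, neg_div_neg_eq, one_div]
  have hsplit : ∫ s in Ioi (0 : ℝ), (ξ s : ℂ) * Complex.exp (-(z * s)) =
      (∫ s in Ioi (0 : ℝ), ((ξ s - L : ℝ) : ℂ) * Complex.exp (-(z * s))) + L * z⁻¹ := by
    rw [← hexp_int, ← integral_const_mul, ← integral_add hint' (hexp.const_mul _)]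
    refine integral_congr_ae (Eventually.of_forall fun s => ?_)
    simp only [Complex.ofReal_sub]
    ring
  have hz0 : z ≠ 0 := by rintro rfl; simp at hz
  rw [hsplit, mul_add, mul_left_comm, mul_inv_cancel₀ hz0, mul_one, add_sub_cancel_right, norm_mul]
  gcongr
  exact (norm_integral_le_integral_norm _).trans_eq (by simp_rw [hnorm])

/-- If `ξ : (0,∞) → ℝ` is measurable with `∫₀^∞ |ξ(s)|/(s+1) ds < ∞` and `0` is
a right Lebesgue point of `ξ` with value `L`, then for every `φ ∈ (0, π/2)`,
`z ∫₀^∞ ξ(s) e^{-zs} ds → L` as `|z| → ∞` with `z` in the sector `S_φ`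
(i.e. `z ≠ 0` and `|z| cos φ < Re z`). -/
theorem stmt_5 (ξ : ℝ → ℝ) (L : ℝ) (φ : ℝ) (hφ : φ ∈ Ioo 0 (Real.pi / 2))
    (hmeas : Measurable ξ)
    (hint : IntegrableOn (fun s : ℝ => |ξ s| / (s + 1)) (Ioi 0))
    (hlp : Tendsto (fun h : ℝ => (1 / h) * ∫ s in Ioc (0 : ℝ) h, |ξ s - L|)
      (nhdsWithin 0 (Ioi 0)) (nhds 0)) :
    Tendsto (fun z : ℂ => z * ∫ s in Ioi (0 : ℝ), (ξ s : ℂ) * Complex.exp (-(z * (s : ℂ))))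
      ((Filter.comap (fun z : ℂ => ‖z‖) Filter.atTop) ⊓
        Filter.principal {z : ℂ | z ≠ 0 ∧ ‖z‖ * Real.cos φ < z.re})
      (nhds (L : ℂ)) := by
  set F := comap (fun z : ℂ => ‖z‖) atTop ⊓ 𝓟 {z : ℂ | z ≠ 0 ∧ ‖z‖ * cos φ < z.re}
  have hc : 0 < cos φ := cos_pos_of_mem_Ioo ⟨by linarith [hφ.1, pi_pos], hφ.2⟩
  have hsector : ∀ᶠ z in F, ‖z‖ * cos φ < z.re :=
    eventually_inf_principal.2 (Eventually.of_forall fun z hz => hz.2)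
  have hre : Tendsto Complex.re F atTop :=
    tendsto_atTop_mono' F (f₁ := fun z => ‖z‖ * cos φ) (hsector.mono fun z hz => hz.le)
      ((tendsto_comap.mono_left inf_le_left).atTop_mul_const hc)
  have hg := integrableOn_abs_sub_mul_exp_neg hmeas hint L
  have hbound : ∀ᶠ z in F,
      ‖z * (∫ s in Ioi (0 : ℝ), (ξ s : ℂ) * Complex.exp (-(z * s))) - L‖ ≤
        (cos φ)⁻¹ * (z.re * ∫ s in Ioi (0 : ℝ), |ξ s - L| * exp (-(z.re * s))) := by
    filter_upwards [hsector, hre.eventually_ge_atTop 1] with z hz hz1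
    refine (norm_mul_integral_ofReal_mul_cexp_sub_le hmeas L (by linarith)
      (integrableOn_mul_exp_neg_mul_of_one_le hg hz1)).trans ?_
    rw [← mul_assoc]
    gcongr
    rw [← div_eq_inv_mul, le_div_iff₀ hc]
    exact hz.le
  have hlim := ((tendsto_mul_integral_mul_exp_neg_mul_atTop (fun s => abs_nonneg _)
    (hmeas.sub_const L).abs hg hlp).comp hre).const_mul (cos φ)⁻¹
  rw [mul_zero] at hlim
  exact tendsto_iff_norm_sub_tendsto_zero.2
    (squeeze_zero' (Eventually.of_forall fun _ => norm_nonneg _) hbound hlim)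
end

section
/- Fix φ ∈ (0, π/2). Let ξ : [0,∞) → ℝ be continuous on (0,∞), with ∫₀^∞ |ξ(λ)| (1+λ)^{−1} dλ < ∞, and suppose the right limit L = lim_{λ↓0} ξ(λ) exists finitely. Then lim_{z→0, z∈ℂ\(S_φ∪{0})} (−z) ∫₀^∞ ξ(λ) (λ − z)^{−2} dλ = L. -/
/-!
For `z` outside the sector and `λ ≥ 0` one has `‖λ - z‖² ≥ (1 - cos φ)/2 · (‖z‖ + λ)²`.
Since `-z ∫₀^∞ (λ - z)⁻² dλ = 1`, the quantity minus `L` equals `-z ∫₀^∞ (ξ λ - L)(λ - z)⁻² dλ`,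
which is bounded by a constant times `‖z‖ ∫₀^∞ |ξ λ - L| (‖z‖ + λ)⁻² dλ`. The kernel
`r (r + λ)⁻²` has unit mass and concentrates at `0` as `r → 0⁺`, while `|ξ - L|` is small near `0`
and integrable against `(1 + λ)⁻²`, so this bound tends to `0`.
-/

open MeasureTheory Filter Set Topology

lemma div_add_sq_le_of_le {a r lam δ : ℝ} (ha : 0 ≤ a) (hδ : 0 < δ) (hr : 0 ≤ r)
    (hlam : 0 ≤ lam) (h : δ ≤ r + lam) :
    a / (r + lam) ^ 2 ≤ ((1 + δ) / δ) ^ 2 * (a / (1 + lam) ^ 2) := by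
  have key : 1 / (r + lam) ≤ (1 + δ) / δ / (1 + lam) := by
    rw [div_div, div_le_div_iff₀ (by linarith) (by positivity)]
    nlinarith
  calc a / (r + lam) ^ 2 = a * (1 / (r + lam)) ^ 2 := by rw [div_pow, one_pow, mul_one_div]
    _ ≤ a * ((1 + δ) / δ / (1 + lam)) ^ 2 := by gcongr
    _ = ((1 + δ) / δ) ^ 2 * (a / (1 + lam) ^ 2) := by field_simp

lemma hasDerivAt_neg_inv_add {r x : ℝ} (hx : r + x ≠ 0) :
    HasDerivAt (fun lam : ℝ => -(r + lam)⁻¹) ((r + x) ^ 2)⁻¹ x :=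
  (((hasDerivAt_id x).const_add r).inv hx).neg.congr_deriv (by simp [neg_div])

lemma tendsto_neg_inv_add_atTop (r : ℝ) :
    Tendsto (fun lam : ℝ => -(r + lam)⁻¹) atTop (𝓝 0) := by
  simpa using (tendsto_inv_atTop_zero.comp (tendsto_atTop_add_const_left _ r tendsto_id)).neg

lemma integrableOn_Ioi_inv_add_sq {r : ℝ} (hr : 0 < r) :
    IntegrableOn (fun lam : ℝ => ((r + lam) ^ 2)⁻¹) (Ioi 0) :=
  integrableOn_Ioi_deriv_of_nonneg' (fun x hx => hasDerivAt_neg_inv_add (by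
    have : (0 : ℝ) ≤ x := hx; positivity)) (fun _ _ => by positivity)
    (tendsto_neg_inv_add_atTop r)

lemma integral_Ioi_inv_add_sq {r : ℝ} (hr : 0 < r) :
    ∫ lam in Ioi (0 : ℝ), ((r + lam) ^ 2)⁻¹ = r⁻¹ := by
  rw [integral_Ioi_of_hasDerivAt_of_nonneg' (fun x hx => hasDerivAt_neg_inv_add (by
    have : (0 : ℝ) ≤ x := hx; positivity)) (fun _ _ => by positivity)
    (tendsto_neg_inv_add_atTop r)]
  simp

lemma integrableOn_abs_div_add_sq {g : ℝ → ℝ} (hgc : ContinuousOn g (Ioi 0))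
    (hg : IntegrableOn (fun lam => |g lam| / (1 + lam) ^ 2) (Ioi 0)) {r : ℝ} (hr : 0 < r) :
    IntegrableOn (fun lam => |g lam| / (r + lam) ^ 2) (Ioi 0) := by
  refine (hg.const_mul (((1 + r) / r) ^ 2)).mono'
    ((hgc.abs.div (by fun_prop) fun lam hlam => by
      have : (0 : ℝ) < lam := hlam; positivity).aestronglyMeasurable measurableSet_Ioi) ?_
  filter_upwards [ae_restrict_mem measurableSet_Ioi] with lam (hlam : 0 < lam)
  rw [Real.norm_of_nonneg (by positivity)]
  exact div_add_sq_le_of_le (abs_nonneg _) hr hr.le hlam.le (by linarith)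

lemma integrableOn_abs_sub_div_one_add_sq {ξ : ℝ → ℝ} (hcont : ContinuousOn ξ (Ioi 0))
    (hint : IntegrableOn (fun lam => |ξ lam| / (1 + lam)) (Ioi 0)) (L : ℝ) :
    IntegrableOn (fun lam => |ξ lam - L| / (1 + lam) ^ 2) (Ioi 0) := by
  refine (hint.add ((integrableOn_Ioi_inv_add_sq one_pos).const_mul |L|)).mono'
    (((hcont.sub continuousOn_const).abs.div (by fun_prop) fun lam hlam => by
      have : (0 : ℝ) < lam := hlam; positivity).aestronglyMeasurable measurableSet_Ioi) ?_
  filter_upwards [ae_restrict_mem measurableSet_Ioi] with lam (hlam : 0 < lam)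
  have h1 : 1 ≤ 1 + lam := by linarith
  rw [Real.norm_of_nonneg (by positivity)]
  show _ ≤ |ξ lam| / (1 + lam) + |L| * ((1 + lam) ^ 2)⁻¹
  rw [← div_eq_mul_inv]
  calc |ξ lam - L| / (1 + lam) ^ 2 ≤ (|ξ lam| + |L|) / (1 + lam) ^ 2 := by
        gcongr; exact abs_sub _ _
    _ ≤ |ξ lam| / (1 + lam) + |L| / (1 + lam) ^ 2 := by
        rw [add_div]
        gcongr
        exact le_self_pow₀ h1 two_ne_zero

lemma mul_integral_abs_div_add_sq_le {g : ℝ → ℝ}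
    (hg : IntegrableOn (fun lam => |g lam| / (1 + lam) ^ 2) (Ioi 0)) {r δ η : ℝ}
    (hr : 0 < r) (hδ : 0 < δ) (hη : ∀ lam ∈ Ioc 0 δ, |g lam| ≤ η) :
    r * ∫ lam in Ioi (0 : ℝ), |g lam| / (r + lam) ^ 2 ≤
      η + r * (((1 + δ) / δ) ^ 2 * ∫ lam in Ioi (0 : ℝ), |g lam| / (1 + lam) ^ 2) := by
  have hη0 : 0 ≤ η := (abs_nonneg _).trans (hη δ ⟨hδ, le_rfl⟩)
  have hle : ∫ lam in Ioi (0 : ℝ), |g lam| / (r + lam) ^ 2 ≤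
      ∫ lam in Ioi (0 : ℝ), (η * ((r + lam) ^ 2)⁻¹ +
        ((1 + δ) / δ) ^ 2 * (|g lam| / (1 + lam) ^ 2)) := by
    refine integral_mono_of_nonneg (Eventually.of_forall fun _ => by positivity)
      (((integrableOn_Ioi_inv_add_sq hr).const_mul η).add (hg.const_mul _)) ?_
    filter_upwards [ae_restrict_mem measurableSet_Ioi] with lam (hlam : 0 < lam)
    rcases le_or_gt lam δ with hlδ | hlδ
    · have : |g lam| / (r + lam) ^ 2 ≤ η * ((r + lam) ^ 2)⁻¹ := by
        rw [← div_eq_mul_inv]; gcongr; exact hη lam ⟨hlam, hlδ⟩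
      linarith [show 0 ≤ ((1 + δ) / δ) ^ 2 * (|g lam| / (1 + lam) ^ 2) by positivity]
    · have := div_add_sq_le_of_le (abs_nonneg (g lam)) hδ hr.le hlam.le (by linarith)
      linarith [show 0 ≤ η * ((r + lam) ^ 2)⁻¹ by positivity]
  rw [integral_add ((integrableOn_Ioi_inv_add_sq hr).const_mul η) (hg.const_mul _),
    integral_const_mul, integral_const_mul, integral_Ioi_inv_add_sq hr] at hle
  calc r * ∫ lam in Ioi (0 : ℝ), |g lam| / (r + lam) ^ 2
      ≤ r * (η * r⁻¹ + ((1 + δ) / δ) ^ 2 * ∫ lam in Ioi (0 : ℝ), |g lam| / (1 + lam) ^ 2) :=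
        mul_le_mul_of_nonneg_left hle hr.le
    _ = _ := by field_simp

theorem tendsto_mul_integral_abs_div_add_sq {g : ℝ → ℝ}
    (hg : IntegrableOn (fun lam => |g lam| / (1 + lam) ^ 2) (Ioi 0))
    (hg0 : Tendsto g (𝓝[>] 0) (𝓝 0)) :
    Tendsto (fun r => r * ∫ lam in Ioi (0 : ℝ), |g lam| / (r + lam) ^ 2) (𝓝[>] 0) (𝓝 0) := by
  refine tendsto_order.2 ⟨fun a ha => ?_, fun ε hε => ?_⟩
  · filter_upwards [self_mem_nhdsWithin] with r (hr : 0 < r)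
    exact ha.trans_le (mul_nonneg hr.le (setIntegral_nonneg measurableSet_Ioi
      fun _ _ => by positivity))
  have habs : Tendsto (fun lam => |g lam|) (𝓝[>] 0) (𝓝 0) := by simpa using hg0.abs
  obtain ⟨δ, hδ, hsmall⟩ := mem_nhdsGT_iff_exists_Ioc_subset.1
    (habs.eventually (gt_mem_nhds (half_pos hε)))
  set C := ((1 + δ) / δ) ^ 2 * ∫ lam in Ioi (0 : ℝ), |g lam| / (1 + lam) ^ 2
  have hlim : Tendsto (fun r => ε / 2 + r * C) (𝓝[>] 0) (𝓝 (ε / 2)) := by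
    refine tendsto_nhdsWithin_of_tendsto_nhds ?_
    simpa using ((tendsto_id (x := 𝓝 (0 : ℝ))).mul_const C).const_add (ε / 2)
  filter_upwards [hlim.eventually (gt_mem_nhds (half_lt_self hε)), self_mem_nhdsWithin]
    with r hrε (hr : 0 < r)
  exact (mul_integral_abs_div_add_sq_le hg hr hδ fun lam hl => (hsmall hl).le).trans_lt hrε

lemma hasDerivAt_neg_inv_ofReal_sub {z : ℂ} {x : ℝ} (hx : (x : ℂ) ≠ z) :
    HasDerivAt (fun lam : ℝ => -((lam : ℂ) - z)⁻¹) (((x : ℂ) - z) ^ 2)⁻¹ x :=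
  (((hasDerivAt_id (x : ℂ)).sub_const z).inv (sub_ne_zero.2 hx)).neg.comp_ofReal.congr_deriv
    (by simp [neg_div])

lemma integral_Ioi_inv_ofReal_sub_sq {z : ℂ} (hz : ∀ lam : ℝ, 0 ≤ lam → (lam : ℂ) ≠ z)
    (hint : IntegrableOn (fun lam : ℝ => (((lam : ℂ) - z) ^ 2)⁻¹) (Ioi 0)) :
    ∫ lam in Ioi (0 : ℝ), (((lam : ℂ) - z) ^ 2)⁻¹ = (-z)⁻¹ := by
  have hlim : Tendsto (fun lam : ℝ => -((lam : ℂ) - z)⁻¹) atTop (𝓝 0) := by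
    simpa using (tendsto_inv₀_cobounded.comp ((tendsto_sub_const_cobounded z).comp
      (RCLike.tendsto_ofReal_atTop_cobounded ℂ))).neg
  rw [integral_Ioi_of_hasDerivAt_of_tendsto'
    (fun x hx => hasDerivAt_neg_inv_ofReal_sub (hz x hx)) hint hlim]
  simp

section Sector

variable {φ : ℝ} {z : ℂ}

-- The two sides differ by at least `(1 + cos φ)/2 · (λ - ‖z‖)² ≥ 0`.
lemma mul_sq_norm_add_le_norm_ofReal_sub_sq (hz : z.re ≤ ‖z‖ * Real.cos φ) {lam : ℝ}
    (hlam : 0 ≤ lam) :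
    (1 - Real.cos φ) / 2 * (‖z‖ + lam) ^ 2 ≤ ‖(lam : ℂ) - z‖ ^ 2 := by
  have hnorm : ‖(lam : ℂ) - z‖ ^ 2 = (lam - z.re) ^ 2 + z.im ^ 2 := by
    rw [Complex.sq_norm, Complex.normSq_apply]
    simp only [Complex.sub_re, Complex.ofReal_re, Complex.sub_im, Complex.ofReal_im, zero_sub]
    ring
  have hz2 : ‖z‖ ^ 2 = z.re ^ 2 + z.im ^ 2 := by
    rw [Complex.sq_norm, Complex.normSq_apply]; ring
  nlinarith [mul_le_mul_of_nonneg_left hz hlam, Real.neg_one_le_cos φ,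
    mul_nonneg (by linarith [Real.neg_one_le_cos φ] : 0 ≤ 1 + Real.cos φ) (sq_nonneg (lam - ‖z‖))]

lemma ofReal_ne_of_re_le (hφ : Real.cos φ < 1) (hz0 : z ≠ 0)
    (hz : z.re ≤ ‖z‖ * Real.cos φ) {lam : ℝ} (hlam : 0 ≤ lam) : (lam : ℂ) ≠ z := by
  rintro rfl
  have hpos : 0 < lam := lt_of_le_of_ne hlam (by rintro rfl; simp at hz0)
  rw [Complex.ofReal_re, Complex.norm_real, Real.norm_of_nonneg hlam] at hz
  nlinarith

lemma norm_inv_ofReal_sub_sq_le (hφ : Real.cos φ < 1) (hz : z.re ≤ ‖z‖ * Real.cos φ)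
    {lam : ℝ} (hlam : 0 ≤ lam) (hpos : 0 < ‖z‖ + lam) :
    ‖(((lam : ℂ) - z) ^ 2)⁻¹‖ ≤ 2 / (1 - Real.cos φ) * ((‖z‖ + lam) ^ 2)⁻¹ := by
  have hk : 0 < (1 - Real.cos φ) / 2 := by linarith
  rw [norm_inv, norm_pow, ← inv_div, ← mul_inv]
  exact inv_anti₀ (by positivity) (mul_sq_norm_add_le_norm_ofReal_sub_sq hz hlam)

lemma integrableOn_inv_ofReal_sub_sq (hφ : Real.cos φ < 1) (hz0 : z ≠ 0)
    (hz : z.re ≤ ‖z‖ * Real.cos φ) :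
    IntegrableOn (fun lam : ℝ => (((lam : ℂ) - z) ^ 2)⁻¹) (Ioi 0) := by
  refine ((integrableOn_Ioi_inv_add_sq (norm_pos_iff.2 hz0)).const_mul
    (2 / (1 - Real.cos φ))).mono' (by fun_prop) ?_
  filter_upwards [ae_restrict_mem measurableSet_Ioi] with lam (hlam : 0 < lam)
  exact norm_inv_ofReal_sub_sq_le hφ hz hlam.le (by positivity)

lemma norm_neg_mul_integral_sub_le (hφ : Real.cos φ < 1) (hz0 : z ≠ 0)
    (hz : z.re ≤ ‖z‖ * Real.cos φ) {ξ : ℝ → ℝ} {L : ℝ} (hcont : ContinuousOn ξ (Ioi 0))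
    (hg : IntegrableOn (fun lam => |ξ lam - L| / (1 + lam) ^ 2) (Ioi 0)) :
    ‖-z * (∫ lam in Ioi (0 : ℝ), (ξ lam : ℂ) * (((lam : ℂ) - z) ^ 2)⁻¹) - L‖ ≤
      2 / (1 - Real.cos φ) * (‖z‖ * ∫ lam in Ioi (0 : ℝ), |ξ lam - L| / (‖z‖ + lam) ^ 2) := by
  set K : ℝ → ℂ := fun lam => (((lam : ℂ) - z) ^ 2)⁻¹
  set C := 2 / (1 - Real.cos φ)
  have hr : 0 < ‖z‖ := norm_pos_iff.2 hz0
  have hK := integrableOn_inv_ofReal_sub_sq hφ hz0 hz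
  have hdom := (integrableOn_abs_div_add_sq (hcont.sub continuousOn_const) hg hr).const_mul C
  have hbound : ∀ᵐ lam ∂(volume.restrict (Ioi 0)),
      ‖((ξ lam - L : ℝ) : ℂ) * K lam‖ ≤ C * (|ξ lam - L| / (‖z‖ + lam) ^ 2) := by
    filter_upwards [ae_restrict_mem measurableSet_Ioi] with lam (hlam : 0 < lam)
    rw [norm_mul, Complex.norm_real, Real.norm_eq_abs]
    calc |ξ lam - L| * ‖K lam‖ ≤ |ξ lam - L| * (C * ((‖z‖ + lam) ^ 2)⁻¹) := by
          gcongr; exact norm_inv_ofReal_sub_sq_le hφ hz hlam.le (by positivity)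
      _ = C * (|ξ lam - L| / (‖z‖ + lam) ^ 2) := by ring
  have hgK : IntegrableOn (fun lam => ((ξ lam - L : ℝ) : ℂ) * K lam) (Ioi 0) := by
    refine hdom.mono' (AEStronglyMeasurable.mul ?_ hK.aestronglyMeasurable) hbound
    exact (Complex.continuous_ofReal.comp_continuousOn
      (hcont.sub continuousOn_const)).aestronglyMeasurable measurableSet_Ioi
  have hsplit : ∫ lam in Ioi (0 : ℝ), (ξ lam : ℂ) * K lam =
      (∫ lam in Ioi (0 : ℝ), ((ξ lam - L : ℝ) : ℂ) * K lam) + L * (-z)⁻¹ := by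
    rw [← integral_Ioi_inv_ofReal_sub_sq (fun lam => ofReal_ne_of_re_le hφ hz0 hz) hK,
      ← integral_const_mul, ← integral_add hgK (hK.const_mul _)]
    refine integral_congr_ae (Eventually.of_forall fun lam => ?_)
    simp only [K]
    push_cast
    ring
  have hneg : -z ≠ 0 := neg_ne_zero.2 hz0
  rw [hsplit, mul_add, mul_left_comm, mul_inv_cancel₀ hneg, mul_one, add_sub_cancel_right,
    norm_mul, norm_neg]
  calc ‖z‖ * ‖∫ lam in Ioi (0 : ℝ), ((ξ lam - L : ℝ) : ℂ) * K lam‖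
      ≤ ‖z‖ * ∫ lam in Ioi (0 : ℝ), C * (|ξ lam - L| / (‖z‖ + lam) ^ 2) :=
        mul_le_mul_of_nonneg_left (norm_integral_le_of_norm_le hdom hbound) hr.le
    _ = C * (‖z‖ * ∫ lam in Ioi (0 : ℝ), |ξ lam - L| / (‖z‖ + lam) ^ 2) := by
        rw [integral_const_mul]; ring

end Sector

/-- Fix `φ ∈ (0, π/2)`. If `ξ : [0,∞) → ℝ` is continuous on `(0,∞)`, with
`∫₀^∞ |ξ(λ)|/(1+λ) dλ < ∞`, and the right limit `L = lim_{λ↓0} ξ(λ)` exists, then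
`(-z) ∫₀^∞ ξ(λ)(λ - z)^{-2} dλ → L` as `z → 0` with `z ∈ ℂ \ (S_φ ∪ {0})`. -/
theorem stmt_10 (φ : ℝ) (hφ : φ ∈ Ioo 0 (Real.pi / 2)) (ξ : ℝ → ℝ) (L : ℝ)
    (hcont : ContinuousOn ξ (Ioi 0))
    (hint : IntegrableOn (fun lam : ℝ => |ξ lam| / (1 + lam)) (Ioi 0))
    (hlim : Tendsto ξ (nhdsWithin 0 (Ioi 0)) (nhds L)) :
    Tendsto (fun z : ℂ =>
        -z * ∫ lam in Ioi (0 : ℝ), (ξ lam : ℂ) * (((lam : ℂ) - z) ^ 2)⁻¹)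
      (nhdsWithin 0 {z : ℂ | z ≠ 0 ∧ z.re ≤ ‖z‖ * Real.cos φ})
      (nhds (L : ℂ)) := by
  have hcos : Real.cos φ < 1 := by
    simpa using Real.cos_lt_cos_of_nonneg_of_le_pi le_rfl
      (by linarith [hφ.2, Real.pi_pos]) hφ.1
  have hg := integrableOn_abs_sub_div_one_add_sq hcont hint L
  have hnorm : Tendsto (‖·‖) (𝓝[{z : ℂ | z ≠ 0 ∧ z.re ≤ ‖z‖ * Real.cos φ}] 0) (𝓝[>] 0) :=
    tendsto_norm_nhdsNE_zero.mono_left (nhdsWithin_mono _ fun _ hz => hz.1)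
  have hsmall :=
    (tendsto_mul_integral_abs_div_add_sq hg (by simpa using hlim.sub_const L)).comp hnorm
  rw [tendsto_iff_norm_sub_tendsto_zero]
  refine squeeze_zero_norm' ?_ (by simpa using hsmall.const_mul (2 / (1 - Real.cos φ)))
  filter_upwards [self_mem_nhdsWithin] with z ⟨hz0, hz⟩
  simpa using norm_neg_mul_integral_sub_le hcos hz0 hz hcont hg
end

section
/- Let f : [0,∞) → ℂ be continuously differentiable and bounded, and suppose there is C > 0 with |f'(λ)| ≤ C (λ + 1)^{−1} for all λ ≥ 0. Define F(ν) = (ν/(2π)) ∫_{ν²}^∞ (f(λ) − f(0)) λ^{−1} (λ − ν²)^{−1/2} dλ for ν ∈ ℝ (with F(0) = 0). Then both integrals below converge absolutely, F is differentiable on ℝ, and for every ν ∈ ℝ, F'(ν) = (1/π) ∫_{ν²}^∞ f'(λ) (λ − ν²)^{−1/2} dλ. Moreover F is odd and F' is even. -/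
open MeasureTheory Set Filter Topology

/-!
The substitution `λ = ν² + u²` turns both Abel integrals into integrals over `u > 0` without
singularity: with `g = slope f 0`, i.e. `g λ = (f λ - f 0) / λ`, one gets
`F ν = π⁻¹ ∫ ν g(ν² + u²) du` and `G ν = 2 π⁻¹ ∫ f'(ν² + u²) du`. Since `|g λ|` and `|f' λ|` are
`O((1 + λ)⁻¹)`, the integrands have the integrable majorant `(1 + u²)⁻¹`, and one may differentiate
under the integral sign. The `ν`-derivative `g + 2ν² g'` of `ν g(ν² + u²)` and the `u`-derivative
`g + 2u² g'` of `u g(ν² + u²)` add up to `2 (g + λ g') = 2 f'`, and the second one integrates to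
zero.
-/

variable {E : Type*} [NormedAddCommGroup E]

section Substitution

variable [NormedSpace ℝ E]

lemma image_add_sq_Ioi (c : ℝ) : (fun u : ℝ => c + u ^ 2) '' Ioi 0 = Ioi c := by
  ext x
  constructor
  · rintro ⟨u, hu, rfl⟩
    simpa using pow_pos hu 2
  · intro hx
    have hx' : 0 < x - c := sub_pos.2 hx
    exact ⟨√(x - c), Real.sqrt_pos.2 hx', by simp [Real.sq_sqrt hx'.le]⟩

lemma injOn_add_sq_Ioi (c : ℝ) : InjOn (fun u : ℝ => c + u ^ 2) (Ioi 0) := fun a ha b hb h => by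
  simp only [add_right_inj] at h
  exact (pow_left_inj₀ (le_of_lt ha) (le_of_lt hb) two_ne_zero).1 h

lemma hasDerivWithinAt_add_sq {s : Set ℝ} (c u : ℝ) :
    HasDerivWithinAt (fun u : ℝ => c + u ^ 2) (2 * u) s u := by
  simpa using ((hasDerivAt_pow 2 u).const_add c).hasDerivWithinAt

lemma abs_two_mul_smul_inv_sqrt_smul {u : ℝ} (hu : 0 < u) (c : ℝ) (y : E) :
    |2 * u| • ((√(c + u ^ 2 - c))⁻¹ • y) = (2 : ℝ) • y := by
  rw [add_sub_cancel_left, Real.sqrt_sq hu.le, smul_smul, abs_of_pos (by positivity),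
    mul_assoc, mul_inv_cancel₀ hu.ne', mul_one]

lemma integrableOn_Ioi_inv_sqrt_sub_smul_iff (c : ℝ) (φ : ℝ → E) :
    IntegrableOn (fun x => (√(x - c))⁻¹ • φ x) (Ioi c) ↔
      IntegrableOn (fun u => φ (c + u ^ 2)) (Ioi 0) := by
  rw [← image_add_sq_Ioi c, integrableOn_image_iff_integrableOn_abs_deriv_smul measurableSet_Ioi
    (fun u _ => hasDerivWithinAt_add_sq c u) (injOn_add_sq_Ioi c)]
  rw [integrableOn_congr_fun (s := Ioi 0)
    (fun u hu => abs_two_mul_smul_inv_sqrt_smul hu c (φ (c + u ^ 2))) measurableSet_Ioi]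
  exact integrable_smul_iff two_ne_zero _

lemma integral_Ioi_inv_sqrt_sub_smul (c : ℝ) (φ : ℝ → E) :
    ∫ x in Ioi c, (√(x - c))⁻¹ • φ x = (2 : ℝ) • ∫ u in Ioi 0, φ (c + u ^ 2) := by
  rw [← image_add_sq_Ioi c, integral_image_eq_integral_abs_deriv_smul measurableSet_Ioi
    (fun u _ => hasDerivWithinAt_add_sq c u) (injOn_add_sq_Ioi c),
    setIntegral_congr_fun measurableSet_Ioi (fun u hu => abs_two_mul_smul_inv_sqrt_smul hu c _),
    integral_smul]

end Substitution

section Slope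

variable [NormedSpace ℝ E] {f : ℝ → E} {x : ℝ}

lemma continuousOn_slope_zero (hf : ContinuousOn f (Ioi 0)) : ContinuousOn (slope f 0) (Ioi 0) := by
  simp only [slope_fun_def, vsub_eq_sub, sub_zero]
  exact (continuousOn_inv₀.mono fun x hx => ne_of_gt hx).smul (hf.sub continuousOn_const)

lemma hasDerivAt_slope_zero {y : E} (hf : HasDerivAt f y x) (hx : x ≠ 0) :
    HasDerivAt (slope f 0) (x⁻¹ • (y - slope f 0 x)) x := by
  have h := (hasDerivAt_inv hx).smul (hf.sub_const (f 0))
  simp only [slope_fun_def, vsub_eq_sub, sub_zero]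
  refine h.congr_deriv ?_
  module

lemma norm_slope_zero_le {C B : ℝ} (hx : 0 < x) (hlip : ‖f x - f 0‖ ≤ C * x)
    (hbd : ‖f x - f 0‖ ≤ B) : ‖slope f 0 x‖ ≤ (C + B) * (1 + x)⁻¹ := by
  rw [slope_def_module, sub_zero, norm_smul, norm_inv, Real.norm_of_nonneg hx.le,
    le_mul_inv_iff₀ (by positivity), inv_mul_eq_div, div_mul_eq_mul_div, div_le_iff₀ hx]
  nlinarith

lemma norm_slope_zero_le_of_hasDerivWithinAt {f' : ℝ → E} {C M : ℝ}
    (hf : ∀ x ∈ Ici (0 : ℝ), HasDerivWithinAt f (f' x) (Ici 0) x)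
    (hf' : ∀ x ∈ Ici (0 : ℝ), ‖f' x‖ ≤ C) (hbd : ∀ x ∈ Ici (0 : ℝ), ‖f x‖ ≤ M) (hx : 0 < x) :
    ‖slope f 0 x‖ ≤ (C + 2 * M) * (1 + x)⁻¹ := by
  refine norm_slope_zero_le hx ?_
    ((norm_sub_le _ _).trans (by linarith [hbd x hx.le, hbd 0 self_mem_Ici]))
  simpa [abs_of_pos hx] using
    (convex_Ici 0).norm_image_sub_le_of_norm_hasDerivWithin_le hf hf' self_mem_Ici hx.le

end Slope

lemma ContinuousOn.comp_add_sq {X : Type*} [TopologicalSpace X] {φ : ℝ → X} {c : ℝ}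
    (hφ : ContinuousOn φ (Ioi 0)) (hc : 0 ≤ c) : ContinuousOn (fun u => φ (c + u ^ 2)) (Ioi 0) :=
  hφ.comp (by fun_prop) fun u (hu : 0 < u) => show 0 < c + u ^ 2 by positivity

section Majorant

variable {g : ℝ → E} {K c : ℝ}

lemma inv_one_add_add_sq_le (hc : 0 ≤ c) (u : ℝ) : (1 + (c + u ^ 2))⁻¹ ≤ (1 + u ^ 2)⁻¹ :=
  inv_anti₀ (by positivity) (by linarith)

lemma nonneg_of_forall_norm_le_mul_inv_one_add (hb : ∀ x, 0 < x → ‖g x‖ ≤ K * (1 + x)⁻¹) :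
    0 ≤ K := by
  nlinarith [hb 1 one_pos, norm_nonneg (g 1)]

lemma integrableOn_comp_add_sq (hg : ContinuousOn g (Ioi 0))
    (hb : ∀ x, 0 < x → ‖g x‖ ≤ K * (1 + x)⁻¹) (hc : 0 ≤ c) :
    IntegrableOn (fun u => g (c + u ^ 2)) (Ioi 0) := by
  refine Integrable.mono' (integrable_inv_one_add_sq.const_mul K).integrableOn
    ((hg.comp_add_sq hc).aestronglyMeasurable measurableSet_Ioi) ?_
  refine (ae_restrict_iff' measurableSet_Ioi).2 (ae_of_all _ fun u (hu : 0 < u) => ?_)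
  exact (hb _ (by positivity)).trans (mul_le_mul_of_nonneg_left (inv_one_add_add_sq_le hc u)
    (nonneg_of_forall_norm_le_mul_inv_one_add hb))

end Majorant

section RadialIntegral

variable [NormedSpace ℝ E] {g g' : ℝ → E} {K c : ℝ}

lemma hasDerivAt_smul_comp_sq_add {y : E} (a c : ℝ) (hg : HasDerivAt g y (a ^ 2 + c)) :
    HasDerivAt (fun a : ℝ => a • g (a ^ 2 + c)) (g (a ^ 2 + c) + (2 * a ^ 2) • y) a := by
  have hsq : HasDerivAt (fun a : ℝ => a ^ 2 + c) (2 * a) a := by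
    simpa using (hasDerivAt_pow 2 a).add_const c
  refine ((hasDerivAt_id a).smul (hg.scomp a hsq)).congr_deriv ?_
  simp only [Function.comp_apply, id]
  module

lemma add_smul_inv_smul_sub_add_eq_two_smul {t s : ℝ} (h : t + s ≠ 0) (x y : E) :
    (x + (2 * t) • (t + s)⁻¹ • (y - x)) + (x + (2 * s) • (t + s)⁻¹ • (y - x)) = (2 : ℝ) • y := by
  rw [← add_add_add_comm, ← add_smul, ← mul_add, mul_smul, smul_smul (t + s), mul_inv_cancel₀ h]
  module

lemma norm_add_smul_inv_smul_sub_le {t s : ℝ} (ht : 0 ≤ t) (hs : 0 ≤ s) (x y : E) :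
    ‖x + (2 * t) • (t + s)⁻¹ • (y - x)‖ ≤ 3 * ‖x‖ + 2 * ‖y‖ := by
  have hts : t * (t + s)⁻¹ ≤ 1 := by
    rcases (add_nonneg ht hs).eq_or_lt with h | h
    · simp [← h]
    · rw [mul_inv_le_iff₀ h]; linarith
  calc ‖x + (2 * t) • (t + s)⁻¹ • (y - x)‖
      ≤ ‖x‖ + 2 * (t * (t + s)⁻¹) * ‖y - x‖ := by
        refine (norm_add_le _ _).trans_eq ?_
        rw [smul_smul, norm_smul, Real.norm_of_nonneg (by positivity)]
        ring
    _ ≤ ‖x‖ + 2 * 1 * (‖y‖ + ‖x‖) := by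
        gcongr
        exact norm_sub_le y x
    _ = 3 * ‖x‖ + 2 * ‖y‖ := by ring

lemma norm_smul_comp_sq_add_le (hb : ∀ x, 0 < x → ‖g x‖ ≤ K * (1 + x)⁻¹) (hc : 0 ≤ c)
    {u : ℝ} (hu : 0 < u) : ‖u • g (u ^ 2 + c)‖ ≤ K * (u * (1 + (u ^ 2 + c))⁻¹) := by
  rw [norm_smul, Real.norm_of_nonneg hu.le, mul_left_comm]
  exact mul_le_mul_of_nonneg_left (hb _ (by positivity)) hu.le

/-- The integrand is the derivative of `u • g (u² + c)`, which vanishes at `0` and at `∞`. -/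
lemma integral_Ioi_add_two_mul_sq_smul_eq_zero [CompleteSpace E]
    (hg : ∀ x, 0 < x → HasDerivAt g (g' x) x) (hb : ∀ x, 0 < x → ‖g x‖ ≤ K * (1 + x)⁻¹)
    (hc : 0 ≤ c)
    (hint : IntegrableOn (fun u => g (u ^ 2 + c) + (2 * u ^ 2) • g' (u ^ 2 + c)) (Ioi 0)) :
    ∫ u in Ioi 0, (g (u ^ 2 + c) + (2 * u ^ 2) • g' (u ^ 2 + c)) = 0 := by
  have hK : 0 ≤ K := nonneg_of_forall_norm_le_mul_inv_one_add hb
  have hnear : ∀ u, 0 ≤ u → ‖u • g (u ^ 2 + c)‖ ≤ K * u := by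
    intro u hu
    rcases hu.eq_or_lt with rfl | hu
    · simp
    refine (norm_smul_comp_sq_add_le hb hc hu).trans (mul_le_mul_of_nonneg_left ?_ hK)
    exact mul_le_of_le_one_right hu.le (inv_le_one_of_one_le₀ (by nlinarith))
  have hfar : ∀ u, 0 < u → ‖u • g (u ^ 2 + c)‖ ≤ K * u⁻¹ := by
    intro u hu
    refine (norm_smul_comp_sq_add_le hb hc hu).trans (mul_le_mul_of_nonneg_left ?_ hK)
    rw [← div_eq_mul_inv, div_le_iff₀ (by positivity), inv_mul_eq_div, le_div_iff₀ hu]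
    nlinarith
  have hzero : ContinuousWithinAt (fun u : ℝ => u • g (u ^ 2 + c)) (Ici 0) 0 := by
    rw [ContinuousWithinAt, zero_smul]
    exact squeeze_zero_norm' (eventually_nhdsWithin_of_forall hnear)
      (by simpa using ((continuous_const_mul K).tendsto 0).mono_left nhdsWithin_le_nhds)
  have htop : Tendsto (fun u : ℝ => u • g (u ^ 2 + c)) atTop (𝓝 0) :=
    squeeze_zero_norm' ((eventually_gt_atTop 0).mono hfar)
      (by simpa using tendsto_inv_atTop_zero.const_mul K)
  rw [integral_Ioi_of_hasDerivAt_of_tendsto hzero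
    (fun u (hu : 0 < u) => hasDerivAt_smul_comp_sq_add u c (hg _ (by positivity))) hint htop]
  simp

end RadialIntegral

section AbelDerivative

variable [NormedSpace ℝ E] [CompleteSpace E] {f f' : ℝ → E} {K : ℝ}

theorem hasDerivAt_integral_smul_slope_comp_sq_add
    (hf : ∀ x, 0 < x → HasDerivAt f (f' x) x) (hf'c : ContinuousOn f' (Ioi 0))
    (hg : ∀ x, 0 < x → ‖slope f 0 x‖ ≤ K * (1 + x)⁻¹)
    (hf' : ∀ x, 0 < x → ‖f' x‖ ≤ K * (1 + x)⁻¹) (ν : ℝ) :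
    HasDerivAt (fun ν : ℝ => ∫ u in Ioi 0, ν • slope f 0 (ν ^ 2 + u ^ 2))
      ((2 : ℝ) • ∫ u in Ioi 0, f' (ν ^ 2 + u ^ 2)) ν := by
  set g' : ℝ → E := fun x => x⁻¹ • (f' x - slope f 0 x)
  have hK : 0 ≤ K := nonneg_of_forall_norm_le_mul_inv_one_add hg
  have hgc : ContinuousOn (slope f 0) (Ioi 0) :=
    continuousOn_slope_zero fun x hx => (hf x hx).continuousAt.continuousWithinAt
  have hg'd : ∀ x, 0 < x → HasDerivAt (slope f 0) (g' x) x :=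
    fun x hx => hasDerivAt_slope_zero (hf x hx) hx.ne'
  have hg'c : ContinuousOn g' (Ioi 0) :=
    (continuousOn_inv₀.mono fun x hx => ne_of_gt hx).smul (hf'c.sub hgc)
  obtain ⟨hPint, hderiv⟩ := hasDerivAt_integral_of_dominated_loc_of_deriv_le
    (μ := volume.restrict (Ioi 0)) (F := fun a u => a • slope f 0 (a ^ 2 + u ^ 2))
    (F' := fun a u => slope f 0 (a ^ 2 + u ^ 2) + (2 * a ^ 2) • g' (a ^ 2 + u ^ 2))
    (bound := fun u => 5 * K * (1 + u ^ 2)⁻¹) (x₀ := ν) univ_mem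
    (Eventually.of_forall fun a =>
      ((hgc.comp_add_sq (sq_nonneg a)).const_smul a).aestronglyMeasurable measurableSet_Ioi)
    ((integrableOn_comp_add_sq hgc hg (sq_nonneg ν)).smul ν)
    (((hgc.comp_add_sq (sq_nonneg ν)).add ((hg'c.comp_add_sq (sq_nonneg ν)).const_smul
      (2 * ν ^ 2))).aestronglyMeasurable measurableSet_Ioi)
    ((ae_restrict_iff' measurableSet_Ioi).2 (ae_of_all _ fun u (hu : 0 < u) a _ => by
      have hpos : 0 < a ^ 2 + u ^ 2 := by positivity
      calc _ ≤ 3 * ‖slope f 0 (a ^ 2 + u ^ 2)‖ + 2 * ‖f' (a ^ 2 + u ^ 2)‖ :=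
            norm_add_smul_inv_smul_sub_le (sq_nonneg a) (sq_nonneg u) _ _
        _ ≤ 5 * K * (1 + (a ^ 2 + u ^ 2))⁻¹ := by linarith [hg _ hpos, hf' _ hpos]
        _ ≤ 5 * K * (1 + u ^ 2)⁻¹ :=
            mul_le_mul_of_nonneg_left (inv_one_add_add_sq_le (sq_nonneg a) u) (by positivity)))
    (integrable_inv_one_add_sq.const_mul (5 * K)).integrableOn
    ((ae_restrict_iff' measurableSet_Ioi).2 (ae_of_all _ fun u (hu : 0 < u) a _ =>
      hasDerivAt_smul_comp_sq_add a (u ^ 2) (hg'd _ (by positivity))))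
  have hsplit : ∀ u ∈ Ioi (0 : ℝ),
      slope f 0 (ν ^ 2 + u ^ 2) + (2 * ν ^ 2) • g' (ν ^ 2 + u ^ 2) =
        (2 : ℝ) • f' (ν ^ 2 + u ^ 2) -
          (slope f 0 (u ^ 2 + ν ^ 2) + (2 * u ^ 2) • g' (u ^ 2 + ν ^ 2)) := by
    intro u (hu : 0 < u)
    rw [add_comm (u ^ 2)]
    exact eq_sub_of_add_eq (add_smul_inv_smul_sub_add_eq_two_smul (by positivity) _ _)
  have hf'int : IntegrableOn (fun u => (2 : ℝ) • f' (ν ^ 2 + u ^ 2)) (Ioi 0) :=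
    (integrableOn_comp_add_sq hf'c hf' (sq_nonneg ν)).smul (2 : ℝ)
  have hHint : IntegrableOn
      (fun u => slope f 0 (u ^ 2 + ν ^ 2) + (2 * u ^ 2) • g' (u ^ 2 + ν ^ 2)) (Ioi 0) := by
    refine IntegrableOn.congr_fun (hf'int.sub hPint) (fun u hu => ?_) measurableSet_Ioi
    simp only [Pi.sub_apply, hsplit u hu, sub_sub_cancel]
  rwa [setIntegral_congr_fun measurableSet_Ioi hsplit, integral_sub hf'int hHint,
    integral_Ioi_add_two_mul_sq_smul_eq_zero hg'd hg (sq_nonneg ν) hHint, sub_zero,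
    integral_smul] at hderiv

end AbelDerivative

theorem stmt_15_general (f f' : ℝ → ℂ) (C M : ℝ)
    (hderiv : ∀ lam ∈ Ici (0 : ℝ), HasDerivWithinAt f (f' lam) (Ici 0) lam)
    (hcont : ContinuousOn f' (Ici 0))
    (hbd : ∀ lam ∈ Ici (0 : ℝ), ‖f lam‖ ≤ M)
    (hf' : ∀ lam ∈ Ici (0 : ℝ), ‖f' lam‖ ≤ C * (lam + 1)⁻¹)
    (F G : ℝ → ℂ)
    (hF : ∀ ν : ℝ, F ν = ((ν / (2 * Real.pi) : ℝ) : ℂ) *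
      ∫ lam in Ioi (ν ^ 2), (((lam * Real.sqrt (lam - ν ^ 2))⁻¹ : ℝ) : ℂ) * (f lam - f 0))
    (hG : ∀ ν : ℝ, G ν = ((Real.pi⁻¹ : ℝ) : ℂ) *
      ∫ lam in Ioi (ν ^ 2), (((Real.sqrt (lam - ν ^ 2))⁻¹ : ℝ) : ℂ) * f' lam) :
    (∀ ν : ℝ, IntegrableOn
        (fun lam : ℝ => (((lam * Real.sqrt (lam - ν ^ 2))⁻¹ : ℝ) : ℂ) * (f lam - f 0))
        (Ioi (ν ^ 2))) ∧
    (∀ ν : ℝ, IntegrableOn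
        (fun lam : ℝ => (((Real.sqrt (lam - ν ^ 2))⁻¹ : ℝ) : ℂ) * f' lam)
        (Ioi (ν ^ 2))) ∧
    (∀ ν : ℝ, HasDerivAt F (G ν) ν) ∧
    (∀ ν : ℝ, F (-ν) = -F ν) ∧
    (∀ ν : ℝ, G (-ν) = G ν) := by
  have hM : 0 ≤ M := (norm_nonneg _).trans (hbd 0 self_mem_Ici)
  have hC : 0 ≤ C := by simpa using (norm_nonneg _).trans (hf' 0 self_mem_Ici)
  have hfat : ∀ x, 0 < x → HasDerivAt f (f' x) x :=
    fun x hx => (hderiv x hx.le).hasDerivAt (Ici_mem_nhds hx)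
  have hslope : ∀ x, 0 < x → ‖slope f 0 x‖ ≤ (C + 2 * M) * (1 + x)⁻¹ :=
    fun x => norm_slope_zero_le_of_hasDerivWithinAt hderiv (fun y hy => (hf' y hy).trans
      (mul_le_of_le_one_right hC (inv_le_one_of_one_le₀ (by linarith [mem_Ici.1 hy])))) hbd
  have hf'K : ∀ x, 0 < x → ‖f' x‖ ≤ (C + 2 * M) * (1 + x)⁻¹ := fun x hx =>
    (hf' x hx.le).trans (by rw [add_comm x]; gcongr; linarith)
  have hkernel₁ : ∀ ν : ℝ, (fun lam : ℝ => (((lam * √(lam - ν ^ 2))⁻¹ : ℝ) : ℂ) * (f lam - f 0))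
      = fun lam => (√(lam - ν ^ 2))⁻¹ • slope f 0 lam := fun ν => funext fun lam => by
    simp only [slope_def_module, sub_zero, Complex.real_smul, mul_inv]
    push_cast
    ring
  have hkernel₂ : ∀ ν : ℝ, (fun lam : ℝ => (((√(lam - ν ^ 2))⁻¹ : ℝ) : ℂ) * f' lam)
      = fun lam => (√(lam - ν ^ 2))⁻¹ • f' lam := fun ν => funext fun lam => by
    rw [Complex.real_smul]
  have hFeq : F = fun ν => (Real.pi⁻¹ : ℝ) • ∫ u in Ioi 0, ν • slope f 0 (ν ^ 2 + u ^ 2) :=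
    funext fun ν => by
      rw [hF, hkernel₁, integral_Ioi_inv_sqrt_sub_smul, integral_smul]
      simp only [Complex.real_smul]
      push_cast
      field_simp
  refine ⟨fun ν => ?_, fun ν => ?_, fun ν => ?_, fun ν => ?_, fun ν => ?_⟩
  · rw [hkernel₁, integrableOn_Ioi_inv_sqrt_sub_smul_iff]
    exact integrableOn_comp_add_sq
      (continuousOn_slope_zero fun x hx => (hfat x hx).continuousAt.continuousWithinAt)
      hslope (sq_nonneg ν)
  · rw [hkernel₂, integrableOn_Ioi_inv_sqrt_sub_smul_iff]
    exact integrableOn_comp_add_sq (hcont.mono Ioi_subset_Ici_self) hf'K (sq_nonneg ν)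
  · rw [hFeq, hG, hkernel₂, integral_Ioi_inv_sqrt_sub_smul, ← Complex.real_smul]
    exact (hasDerivAt_integral_smul_slope_comp_sq_add hfat (hcont.mono Ioi_subset_Ici_self)
      hslope hf'K ν).const_smul (Real.pi⁻¹ : ℝ)
  · rw [hF, hF, neg_sq]
    push_cast
    ring
  · rw [hG, hG, neg_sq]

/-- Let `f : [0,∞) → ℂ` be `C¹` and bounded with
`|f'(λ)| ≤ C (λ+1)^{-1}`. Define `F(ν) = (ν/(2π)) ∫_{ν²}^∞ (f(λ) - f(0)) λ^{-1}
(λ - ν²)^{-1/2} dλ`. Then both integrals converge absolutely, `F` is differentiable on `ℝ`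
with `F'(ν) = (1/π) ∫_{ν²}^∞ f'(λ)(λ - ν²)^{-1/2} dλ`, `F` is odd and `F'` is even. -/
theorem stmt_15 (f f' : ℝ → ℂ) (C M : ℝ) (hC : 0 < C)
    (hderiv : ∀ lam ∈ Ici (0 : ℝ), HasDerivWithinAt f (f' lam) (Ici 0) lam)
    (hcont : ContinuousOn f' (Ici 0))
    (hbd : ∀ lam ∈ Ici (0 : ℝ), ‖f lam‖ ≤ M)
    (hf' : ∀ lam ∈ Ici (0 : ℝ), ‖f' lam‖ ≤ C * (lam + 1)⁻¹)
    (F G : ℝ → ℂ)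
    (hF : ∀ ν : ℝ, F ν = ((ν / (2 * Real.pi) : ℝ) : ℂ) *
      ∫ lam in Ioi (ν ^ 2), (((lam * Real.sqrt (lam - ν ^ 2))⁻¹ : ℝ) : ℂ) * (f lam - f 0))
    (hG : ∀ ν : ℝ, G ν = ((Real.pi⁻¹ : ℝ) : ℂ) *
      ∫ lam in Ioi (ν ^ 2), (((Real.sqrt (lam - ν ^ 2))⁻¹ : ℝ) : ℂ) * f' lam) :
    (∀ ν : ℝ, IntegrableOn
        (fun lam : ℝ => (((lam * Real.sqrt (lam - ν ^ 2))⁻¹ : ℝ) : ℂ) * (f lam - f 0))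
        (Ioi (ν ^ 2))) ∧
    (∀ ν : ℝ, IntegrableOn
        (fun lam : ℝ => (((Real.sqrt (lam - ν ^ 2))⁻¹ : ℝ) : ℂ) * f' lam)
        (Ioi (ν ^ 2))) ∧
    (∀ ν : ℝ, HasDerivAt F (G ν) ν) ∧
    (∀ ν : ℝ, F (-ν) = -F ν) ∧
    (∀ ν : ℝ, G (-ν) = G ν) :=
  stmt_15_general f f' C M hderiv hcont hbd hf' F G hF hG
end

section
/- Let f : [0,∞) → ℂ be continuously differentiable with lim_{λ→∞} f(λ) = 0, and suppose there are C > 0 and ε > 0 with |f'(λ)| ≤ C (λ + 1)^{−1−ε} for all λ ≥ 0. Define F(ν) = (ν/(2π)) ∫_{ν²}^∞ (f(λ) − f(0)) λ^{−1} (λ − ν²)^{−1/2} dλ for ν ∈ ℝ. Then F is continuous and bounded on ℝ, lim_{ν→+∞} F(ν) = −f(0)/2, and lim_{ν→−∞} F(ν) = f(0)/2. -/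
/-!
The substitution `λ = ν² (1 + x²)` turns the transform into
`F ν = (sign ν / π) ∫₀^∞ (f (ν² (1 + x²)) - f 0) / (1 + x²) dx`.
As `f` is continuous on `[0, ∞)` with a limit at infinity, it is bounded, so the integrand is
dominated by a multiple of `(1 + x²)⁻¹`. Dominated convergence then gives continuity in `ν²`
(with value `0` at `ν = 0`, which absorbs the jump of the sign) and, as `ν² → ∞`, the limit
`-(π / 2) f 0`, since `∫₀^∞ (1 + x²)⁻¹ dx = π / 2`.
-/

open MeasureTheory Filter Set Real Topology

theorem ContinuousOn.exists_norm_le_of_tendsto_atTop {E : Type*} [NormedAddCommGroup E]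
    {g : ℝ → E} {a : ℝ} {L : E} (hgc : ContinuousOn g (Ici a))
    (hg : Tendsto g atTop (𝓝 L)) :
    ∃ M, ∀ x ∈ Ici a, ‖g x‖ ≤ M := by
  obtain ⟨A, hA⟩ : ∃ A, ∀ x ≥ A, ‖g x‖ ≤ ‖L‖ + 1 :=
    eventually_atTop.mp (hg.norm.eventually (ge_mem_nhds (lt_add_one _)))
  obtain ⟨B, hB⟩ := isCompact_Icc.exists_bound_of_continuousOn
    (hgc.mono (Icc_subset_Ici_self : Icc a (max A a) ⊆ Ici a))
  refine ⟨max B (‖L‖ + 1), fun x hx => ?_⟩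
  rcases le_total x (max A a) with h | h
  · exact (hB x ⟨hx, h⟩).trans (le_max_left _ _)
  · exact (hA x (le_of_max_le_left h)).trans (le_max_right _ _)

variable {E : Type*} [NormedAddCommGroup E] [NormedSpace ℝ E]

theorem integral_Ioi_inv_mul_sqrt_sub_smul (g : ℝ → E) {c : ℝ} (hc : 0 < c) :
    ∫ t in Ioi c, (t * √(t - c))⁻¹ • g t =
      (2 / √c) • ∫ x in Ioi 0, (1 + x ^ 2)⁻¹ • g (c * (1 + x ^ 2)) := by
  have himage : (fun x : ℝ => c * (1 + x ^ 2)) '' Ioi 0 = Ioi c := by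
    ext t
    constructor
    · rintro ⟨x, hx, rfl⟩
      have : 0 < c * x ^ 2 := mul_pos hc (pow_pos hx 2)
      simp only [mem_Ioi]
      linarith
    · intro ht
      have ht' : 0 < t / c - 1 := by rw [sub_pos, one_lt_div hc]; exact ht
      refine ⟨√(t / c - 1), sqrt_pos.mpr ht', ?_⟩
      change c * (1 + √(t / c - 1) ^ 2) = t
      rw [sq_sqrt ht'.le]
      field_simp
      ring
  have hderiv : ∀ x ∈ Ioi (0 : ℝ),
      HasDerivWithinAt (fun x : ℝ => c * (1 + x ^ 2)) (c * (2 * x)) (Ioi 0) x := by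
    intro x _
    simpa using (((hasDerivAt_pow 2 x).const_add 1).const_mul c).hasDerivWithinAt
  have hinj : InjOn (fun x : ℝ => c * (1 + x ^ 2)) (Ioi 0) := by
    intro x hx y hy hxy
    have : x ^ 2 = y ^ 2 := by simpa [hc.ne'] using hxy
    exact (pow_left_inj₀ hx.le hy.le two_ne_zero).mp this
  rw [← himage, integral_image_eq_integral_abs_deriv_smul measurableSet_Ioi hderiv hinj,
    ← integral_smul]
  refine setIntegral_congr_fun measurableSet_Ioi fun x (hx : 0 < x) => ?_
  have hsqrt : √(c * (1 + x ^ 2) - c) = √c * x := by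
    rw [show c * (1 + x ^ 2) - c = c * x ^ 2 by ring, sqrt_mul hc.le, sqrt_sq hx.le]
  simp only [smul_smul, hsqrt]
  congr 1
  have : 0 < √c := sqrt_pos.mpr hc
  rw [abs_of_pos (by positivity)]
  field_simp

noncomputable def cauchyWeightedIntegral (g : ℝ → E) (s : ℝ) : E :=
  ∫ x in Ioi 0, (1 + x ^ 2)⁻¹ • g (s * (1 + x ^ 2))

noncomputable def abelTransform (g : ℝ → E) (ν : ℝ) : E :=
  (ν / (2 * π)) • ∫ t in Ioi (ν ^ 2), (t * √(t - ν ^ 2))⁻¹ • g t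

-- `ν / |ν|` is the sign of `ν`, also at `ν = 0`, where division by zero gives `0`.
theorem abelTransform_eq_smul_cauchyWeightedIntegral (g : ℝ → E) (ν : ℝ) :
    abelTransform g ν = (ν / (π * |ν|)) • cauchyWeightedIntegral g (ν ^ 2) := by
  rcases eq_or_ne ν 0 with rfl | hν
  · simp [abelTransform]
  rw [abelTransform, integral_Ioi_inv_mul_sqrt_sub_smul g (by positivity), sqrt_sq_eq_abs,
    smul_smul, cauchyWeightedIntegral]
  congr 1
  have : 0 < |ν| := abs_pos.mpr hν
  field_simp

theorem abelTransform_neg (g : ℝ → E) (ν : ℝ) :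
    abelTransform g (-ν) = -abelTransform g ν := by
  simp only [abelTransform, neg_sq, neg_div, neg_smul]

namespace cauchyWeightedIntegral

variable {g : ℝ → E} {M s : ℝ}

theorem aestronglyMeasurable_integrand (hgc : ContinuousOn g (Ici 0)) (hs : 0 ≤ s) :
    AEStronglyMeasurable (fun x : ℝ => (1 + x ^ 2)⁻¹ • g (s * (1 + x ^ 2)))
      (volume.restrict (Ioi 0)) := by
  refine Continuous.aestronglyMeasurable (Continuous.smul ?_ ?_)
  · exact (by fun_prop : Continuous fun x : ℝ => 1 + x ^ 2).inv₀ fun x => by positivity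
  · exact hgc.comp_continuous (by fun_prop) fun x => mul_nonneg hs (by positivity)

theorem norm_integrand_le (hgb : ∀ t ∈ Ici 0, ‖g t‖ ≤ M) (hs : 0 ≤ s) (x : ℝ) :
    ‖(1 + x ^ 2)⁻¹ • g (s * (1 + x ^ 2))‖ ≤ M * (1 + x ^ 2)⁻¹ := by
  rw [norm_smul, norm_inv, Real.norm_of_nonneg (by positivity), mul_comm]
  exact mul_le_mul_of_nonneg_right (hgb _ (mul_nonneg hs (by positivity))) (by positivity)

theorem integrable_bound (M : ℝ) :
    Integrable (fun x : ℝ => M * (1 + x ^ 2)⁻¹) (volume.restrict (Ioi 0)) :=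
  integrable_inv_one_add_sq.integrableOn.const_mul M

theorem norm_le (hgb : ∀ t ∈ Ici 0, ‖g t‖ ≤ M) (hs : 0 ≤ s) :
    ‖cauchyWeightedIntegral g s‖ ≤ M * (π / 2) := by
  calc ‖cauchyWeightedIntegral g s‖ ≤ ∫ x in Ioi 0, M * (1 + x ^ 2)⁻¹ :=
        norm_integral_le_of_norm_le (integrable_bound M)
          (Eventually.of_forall (norm_integrand_le hgb hs))
    _ = M * (π / 2) := by simp [integral_const_mul]

theorem continuousOn (hgc : ContinuousOn g (Ici 0)) (hgb : ∀ t ∈ Ici 0, ‖g t‖ ≤ M) :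
    ContinuousOn (cauchyWeightedIntegral g) (Ici 0) := by
  refine continuousOn_of_dominated (fun s hs => aestronglyMeasurable_integrand hgc hs)
    (fun s hs => Eventually.of_forall (norm_integrand_le hgb hs)) (integrable_bound M)
    (Eventually.of_forall fun x => ?_)
  exact continuousOn_const.smul
    (hgc.comp (by fun_prop) fun s (hs : 0 ≤ s) => mul_nonneg hs (by positivity))

theorem tendsto_atTop [CompleteSpace E] {L : E} (hgc : ContinuousOn g (Ici 0))
    (hgb : ∀ t ∈ Ici 0, ‖g t‖ ≤ M) (hg : Tendsto g atTop (𝓝 L)) :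
    Tendsto (cauchyWeightedIntegral g) atTop (𝓝 ((π / 2) • L)) := by
  have hlim : ∀ x : ℝ, Tendsto (fun s => (1 + x ^ 2)⁻¹ • g (s * (1 + x ^ 2))) atTop
      (𝓝 ((1 + x ^ 2)⁻¹ • L)) := fun x =>
    (hg.comp (tendsto_id.atTop_mul_const (by positivity))).const_smul _
  have := tendsto_integral_filter_of_dominated_convergence _
    ((eventually_ge_atTop 0).mono fun s hs => aestronglyMeasurable_integrand hgc hs)
    ((eventually_ge_atTop 0).mono fun s hs => Eventually.of_forall (norm_integrand_le hgb hs))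
    (integrable_bound M) (Eventually.of_forall hlim)
  have hval : ∫ x in Ioi (0 : ℝ), (1 + x ^ 2)⁻¹ • L = (π / 2) • L := by
    simp [integral_smul_const]
  rwa [hval] at this

end cauchyWeightedIntegral

namespace abelTransform

variable {g : ℝ → E} {M : ℝ}

theorem norm_le_inv_pi_mul (g : ℝ → E) (ν : ℝ) :
    ‖abelTransform g ν‖ ≤ π⁻¹ * ‖cauchyWeightedIntegral g (ν ^ 2)‖ := by
  rw [abelTransform_eq_smul_cauchyWeightedIntegral, norm_smul]
  gcongr
  rcases eq_or_ne ν 0 with rfl | hν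
  · simp [pi_pos.le]
  · have : 0 < |ν| := abs_pos.mpr hν
    rw [norm_div, norm_mul, Real.norm_eq_abs, Real.norm_of_nonneg pi_pos.le, Real.norm_eq_abs,
      abs_abs]
    field_simp
    rfl

theorem norm_le (hgb : ∀ t ∈ Ici 0, ‖g t‖ ≤ M) (ν : ℝ) :
    ‖abelTransform g ν‖ ≤ M / 2 :=
  calc ‖abelTransform g ν‖ ≤ π⁻¹ * (M * (π / 2)) :=
        (norm_le_inv_pi_mul g ν).trans <| by
          gcongr; exact cauchyWeightedIntegral.norm_le hgb (sq_nonneg ν)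
    _ = M / 2 := by field_simp

protected theorem continuous (hgc : ContinuousOn g (Ici 0)) (hgb : ∀ t ∈ Ici 0, ‖g t‖ ≤ M)
    (hg0 : g 0 = 0) : Continuous (abelTransform g) := by
  rw [continuous_iff_continuousAt]
  intro ν
  have hsq : ContinuousAt (fun ν : ℝ => cauchyWeightedIntegral g (ν ^ 2)) ν :=
    ((cauchyWeightedIntegral.continuousOn hgc hgb).comp_continuous (continuous_pow 2)
      sq_nonneg).continuousAt
  rcases eq_or_ne ν 0 with rfl | hν
  · have h0 : cauchyWeightedIntegral g 0 = 0 := by simp [cauchyWeightedIntegral, hg0]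
    have hF0 : abelTransform g 0 = 0 := by simp [abelTransform]
    rw [ContinuousAt, hF0]
    refine squeeze_zero_norm (norm_le_inv_pi_mul g) ?_
    simpa [h0] using (hsq.norm.const_mul π⁻¹).tendsto
  · rw [funext (abelTransform_eq_smul_cauchyWeightedIntegral g)]
    exact (continuousAt_id.div (by fun_prop) (by positivity)).smul hsq

theorem tendsto_atTop [CompleteSpace E] {L : E} (hgc : ContinuousOn g (Ici 0))
    (hgb : ∀ t ∈ Ici 0, ‖g t‖ ≤ M) (hg : Tendsto g atTop (𝓝 L)) :
    Tendsto (abelTransform g) atTop (𝓝 ((2 : ℝ)⁻¹ • L)) := by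
  have h := ((cauchyWeightedIntegral.tendsto_atTop hgc hgb hg).comp
    (tendsto_pow_atTop two_ne_zero)).const_smul π⁻¹
  rw [smul_smul, show π⁻¹ * (π / 2) = 2⁻¹ by field_simp] at h
  refine h.congr' ?_
  filter_upwards [eventually_gt_atTop 0] with ν hν
  rw [abelTransform_eq_smul_cauchyWeightedIntegral, abs_of_pos hν,
    show ν / (π * ν) = π⁻¹ by field_simp]
  rfl

theorem tendsto_atBot [CompleteSpace E] {L : E} (hgc : ContinuousOn g (Ici 0))
    (hgb : ∀ t ∈ Ici 0, ‖g t‖ ≤ M) (hg : Tendsto g atTop (𝓝 L)) :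
    Tendsto (abelTransform g) atBot (𝓝 (-((2 : ℝ)⁻¹ • L))) :=
  ((tendsto_atTop hgc hgb hg).neg.comp tendsto_neg_atBot_atTop).congr fun ν => by
    simp [abelTransform_neg]

end abelTransform

theorem stmt_16_general (f f' : ℝ → ℂ)
    (hderiv : ∀ lam ∈ Ici (0 : ℝ), HasDerivWithinAt f (f' lam) (Ici 0) lam)
    (hlim : Tendsto f atTop (nhds 0))
    (F : ℝ → ℂ)
    (hF : ∀ ν : ℝ, F ν = ((ν / (2 * Real.pi) : ℝ) : ℂ) *
      ∫ lam in Ioi (ν ^ 2), (((lam * Real.sqrt (lam - ν ^ 2))⁻¹ : ℝ) : ℂ) * (f lam - f 0)) :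
    Continuous F ∧ (∃ K : ℝ, ∀ ν : ℝ, ‖F ν‖ ≤ K) ∧
    Tendsto F atTop (nhds (-(f 0) / 2)) ∧
    Tendsto F atBot (nhds (f 0 / 2)) := by
  set g : ℝ → ℂ := fun t => f t - f 0
  have hfc : ContinuousOn f (Ici 0) := fun t ht => (hderiv t ht).continuousWithinAt
  have hgc : ContinuousOn g (Ici 0) := hfc.sub continuousOn_const
  have hg : Tendsto g atTop (𝓝 (-f 0)) := by simpa using hlim.sub_const (f 0)
  obtain ⟨M, hgb⟩ := hgc.exists_norm_le_of_tendsto_atTop hg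
  obtain rfl : F = abelTransform g := funext fun ν => by
    simp only [hF, abelTransform, Complex.real_smul]
    rfl
  have hhalf : (2 : ℝ)⁻¹ • -f 0 = -f 0 / 2 := by rw [Complex.real_smul]; push_cast; ring
  refine ⟨abelTransform.continuous hgc hgb (sub_self _), ⟨M / 2, abelTransform.norm_le hgb⟩,
    ?_, ?_⟩
  · simpa [hhalf] using abelTransform.tendsto_atTop hgc hgb hg
  · simpa [hhalf, neg_div] using abelTransform.tendsto_atBot hgc hgb hg

/-- Let `f : [0,∞) → ℂ` be `C¹` with `f(λ) → 0` as `λ → ∞` and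
`|f'(λ)| ≤ C (λ+1)^{-1-ε}`. Define
`F(ν) = (ν/(2π)) ∫_{ν²}^∞ (f(λ) - f(0)) λ^{-1} (λ - ν²)^{-1/2} dλ`. Then `F` is
continuous and bounded on `ℝ`, `F(ν) → -f(0)/2` as `ν → +∞`, and `F(ν) → f(0)/2`
as `ν → -∞`. -/
theorem stmt_16 (f f' : ℝ → ℂ) (C ε : ℝ) (hC : 0 < C) (hε : 0 < ε)
    (hderiv : ∀ lam ∈ Ici (0 : ℝ), HasDerivWithinAt f (f' lam) (Ici 0) lam)
    (hcont : ContinuousOn f' (Ici 0))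
    (hlim : Tendsto f atTop (nhds 0))
    (hf' : ∀ lam ∈ Ici (0 : ℝ), ‖f' lam‖ ≤ C * (lam + 1) ^ (-(1 : ℝ) - ε))
    (F : ℝ → ℂ)
    (hF : ∀ ν : ℝ, F ν = ((ν / (2 * Real.pi) : ℝ) : ℂ) *
      ∫ lam in Ioi (ν ^ 2), (((lam * Real.sqrt (lam - ν ^ 2))⁻¹ : ℝ) : ℂ) * (f lam - f 0)) :
    Continuous F ∧ (∃ K : ℝ, ∀ ν : ℝ, ‖F ν‖ ≤ K) ∧
    Tendsto F atTop (nhds (-(f 0) / 2)) ∧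
    Tendsto F atBot (nhds (f 0 / 2)) :=
  stmt_16_general f f' hderiv hlim F hF
end

section
/- For every s > 0 and every ν ∈ ℝ, the integral below converges absolutely and (ν/(2π)) ∫_{ν²}^∞ (e^{−sλ} − 1) λ^{−1} (λ − ν²)^{−1/2} dλ = −π^{−1/2} ∫₀^{s^{1/2} ν} e^{−y²} dy; that is, the Abel transform of the heat kernel function f(λ) = e^{−sλ} equals −(1/2) erf(s^{1/2} ν). -/
/-!
For `x > 0`, `(1 - e^{-a²x}) / x = ∫₀^a 2u e^{-u²x} du`. Substituting this and exchanging the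
order of integration (the integrand is nonnegative with finite iterated integral, which also
gives absolute convergence) turns the `x`-integral into the shifted Gamma integral
`∫_c^∞ e^{-u²x} (x - c)^{-1/2} dx = e^{-u²c} √π / u`, so the transform equals
`2√π ∫₀^a e^{-u²c} du`. With `a = √s`, `c = ν²` the linear substitution `y = νu` gives the
error function.
-/

open MeasureTheory Set Real

lemma integrableOn_exp_neg_mul_div_sqrt {r : ℝ} (hr : 0 < r) :
    IntegrableOn (fun x => exp (-(r * x)) / √x) (Ioi 0) := by
  refine (integrableOn_rpow_mul_exp_neg_mul_rpow (by norm_num : (-1 : ℝ) < -(1 / 2))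
    one_pos hr).congr_fun (fun x hx => ?_) measurableSet_Ioi
  dsimp only
  rw [rpow_one, rpow_neg hx.le, ← sqrt_eq_rpow, neg_mul, div_eq_inv_mul]

lemma integral_exp_neg_mul_div_sqrt {r : ℝ} (hr : 0 < r) :
    ∫ x in Ioi 0, exp (-(r * x)) / √x = √π / √r := by
  have h := integral_rpow_mul_exp_neg_mul_Ioi (by norm_num : (0 : ℝ) < 1 / 2) hr
  rw [Gamma_one_half_eq, ← sqrt_eq_rpow, one_div r, sqrt_inv, ← div_eq_inv_mul] at h
  rw [← h]
  refine setIntegral_congr_fun measurableSet_Ioi (fun x hx => ?_)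
  rw [show (1 : ℝ) / 2 - 1 = -(1 / 2) by norm_num, rpow_neg hx.le, ← sqrt_eq_rpow,
    div_eq_inv_mul]

lemma integrableOn_Ioi_comp_add_right_iff {E : Type*} [NormedAddCommGroup E]
    (f : ℝ → E) (c : ℝ) :
    IntegrableOn (fun x => f (x + c)) (Ioi 0) ↔ IntegrableOn f (Ioi c) := by
  simpa [Function.comp_def] using
    (measurePreserving_add_right volume c).integrableOn_comp_preimage
      (measurableEmbedding_addRight c) (f := f) (s := Ioi c)

lemma integral_Ioi_comp_add_right {E : Type*} [NormedAddCommGroup E] [NormedSpace ℝ E]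
    (f : ℝ → E) (c : ℝ) :
    ∫ x in Ioi 0, f (x + c) = ∫ x in Ioi c, f x := by
  simpa using (measurePreserving_add_right volume c).setIntegral_preimage_emb
      (measurableEmbedding_addRight c) f (Ioi c)

lemma exp_neg_mul_div_sqrt_sub_comp_add (r c x : ℝ) :
    exp (-(r * (x + c))) / √(x + c - c) = exp (-(r * c)) * (exp (-(r * x)) / √x) := by
  rw [add_sub_cancel_right, mul_add, neg_add, exp_add]
  ring

lemma integrableOn_exp_neg_mul_div_sqrt_sub {r : ℝ} (hr : 0 < r) (c : ℝ) :
    IntegrableOn (fun x => exp (-(r * x)) / √(x - c)) (Ioi c) := by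
  rw [← integrableOn_Ioi_comp_add_right_iff]
  simp only [exp_neg_mul_div_sqrt_sub_comp_add]
  exact (integrableOn_exp_neg_mul_div_sqrt hr).const_mul _

lemma integral_exp_neg_mul_div_sqrt_sub {r : ℝ} (hr : 0 < r) (c : ℝ) :
    ∫ x in Ioi c, exp (-(r * x)) / √(x - c) = exp (-(r * c)) * (√π / √r) := by
  rw [← integral_Ioi_comp_add_right]
  simp only [exp_neg_mul_div_sqrt_sub_comp_add]
  rw [integral_const_mul, integral_exp_neg_mul_div_sqrt hr]

lemma integral_two_mul_mul_exp_neg_sq_mul {x : ℝ} (hx : x ≠ 0) (a : ℝ) :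
    ∫ u in 0..a, 2 * u * exp (-(u ^ 2 * x)) = (1 - exp (-(a ^ 2 * x))) / x := by
  have hderiv : ∀ u ∈ uIcc 0 a,
      HasDerivAt (fun u => -exp (-(u ^ 2 * x)) / x) (2 * u * exp (-(u ^ 2 * x))) u := by
    intro u _
    refine ((((hasDerivAt_pow 2 u).mul_const x).fun_neg.exp).fun_neg.div_const x).congr_deriv ?_
    field_simp
    ring
  rw [intervalIntegral.integral_eq_sub_of_hasDerivAt hderiv
    (Continuous.intervalIntegrable (by fun_prop) 0 a)]
  rw [zero_pow two_ne_zero, zero_mul, neg_zero, exp_zero]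
  ring

lemma integral_two_mul_mul_exp_neg_sq_mul_div_sqrt_sub {u : ℝ} (hu : 0 < u) (c : ℝ) :
    ∫ x in Ioi c, 2 * u * exp (-(u ^ 2 * x)) / √(x - c) = 2 * √π * exp (-(u ^ 2 * c)) := by
  simp_rw [mul_div_assoc]
  rw [integral_const_mul, integral_exp_neg_mul_div_sqrt_sub (by positivity), sqrt_sq hu.le]
  field_simp

lemma integrable_two_mul_mul_exp_neg_sq_mul_div_sqrt_sub (a c : ℝ) :
    Integrable (fun p : ℝ × ℝ => 2 * p.1 * exp (-(p.1 ^ 2 * p.2)) / √(p.2 - c))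
      ((volume.restrict (Ioc 0 a)).prod (volume.restrict (Ioi c))) := by
  refine (integrable_prod_iff (by fun_prop : Measurable _).aestronglyMeasurable).2 ⟨?_, ?_⟩
  · refine (ae_restrict_iff' measurableSet_Ioc).2 (.of_forall fun u hu => ?_)
    simp_rw [mul_div_assoc]
    exact (integrableOn_exp_neg_mul_div_sqrt_sub (pow_pos hu.1 2) c).const_mul _
  · have h_eq : (fun u => ∫ x in Ioi c, ‖2 * u * exp (-(u ^ 2 * x)) / √(x - c)‖)
        =ᵐ[volume.restrict (Ioc 0 a)] fun u => 2 * √π * exp (-(u ^ 2 * c)) := by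
      refine (ae_restrict_iff' measurableSet_Ioc).2 (.of_forall fun u hu => ?_)
      have h_nonneg (x : ℝ) : 0 ≤ 2 * u * exp (-(u ^ 2 * x)) / √(x - c) := by
        have := hu.1
        positivity
      simp_rw [fun x => Real.norm_of_nonneg (h_nonneg x)]
      exact integral_two_mul_mul_exp_neg_sq_mul_div_sqrt_sub hu.1 c
    exact (by fun_prop : Continuous fun u => 2 * √π * exp (-(u ^ 2 * c))).integrableOn_Ioc.congr
      h_eq.symm

lemma integral_Ioc_two_mul_mul_exp_neg_sq_mul_div_sqrt_sub {a : ℝ} (ha : 0 ≤ a) (c : ℝ) {x : ℝ}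
    (hx : x ≠ 0) :
    ∫ u in Ioc 0 a, 2 * u * exp (-(u ^ 2 * x)) / √(x - c)
      = (1 - exp (-(a ^ 2 * x))) / (x * √(x - c)) := by
  rw [integral_div, ← intervalIntegral.integral_of_le ha,
    integral_two_mul_mul_exp_neg_sq_mul hx, div_div]

lemma integrableOn_one_sub_exp_div_mul_sqrt_sub {a c : ℝ} (ha : 0 ≤ a) (hc : 0 ≤ c) :
    IntegrableOn (fun x => (1 - exp (-(a ^ 2 * x))) / (x * √(x - c))) (Ioi c) := by
  refine (integrable_two_mul_mul_exp_neg_sq_mul_div_sqrt_sub a c).integral_prod_right.congr ?_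
  refine (ae_restrict_iff' measurableSet_Ioi).2 (.of_forall fun x hx => ?_)
  exact integral_Ioc_two_mul_mul_exp_neg_sq_mul_div_sqrt_sub ha c (hc.trans_lt hx).ne'

lemma integral_one_sub_exp_div_mul_sqrt_sub {a c : ℝ} (ha : 0 ≤ a) (hc : 0 ≤ c) :
    ∫ x in Ioi c, (1 - exp (-(a ^ 2 * x))) / (x * √(x - c))
      = 2 * √π * ∫ u in 0..a, exp (-(u ^ 2 * c)) := by
  calc ∫ x in Ioi c, (1 - exp (-(a ^ 2 * x))) / (x * √(x - c))
      = ∫ x in Ioi c, ∫ u in Ioc 0 a, 2 * u * exp (-(u ^ 2 * x)) / √(x - c) :=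
        setIntegral_congr_fun measurableSet_Ioi fun x hx =>
          (integral_Ioc_two_mul_mul_exp_neg_sq_mul_div_sqrt_sub ha c (hc.trans_lt hx).ne').symm
    _ = ∫ u in Ioc 0 a, ∫ x in Ioi c, 2 * u * exp (-(u ^ 2 * x)) / √(x - c) :=
        (integral_integral_swap (integrable_two_mul_mul_exp_neg_sq_mul_div_sqrt_sub a c)).symm
    _ = ∫ u in Ioc 0 a, 2 * √π * exp (-(u ^ 2 * c)) :=
        setIntegral_congr_fun measurableSet_Ioc fun u hu =>
          integral_two_mul_mul_exp_neg_sq_mul_div_sqrt_sub hu.1 c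
    _ = 2 * √π * ∫ u in 0..a, exp (-(u ^ 2 * c)) := by
        rw [integral_const_mul, intervalIntegral.integral_of_le ha]

/-- For every `s > 0` and `ν ∈ ℝ` the integral converges absolutely and
`(ν/(2π)) ∫_{ν²}^∞ (e^{-sλ} - 1) λ^{-1} (λ - ν²)^{-1/2} dλ
  = -π^{-1/2} ∫₀^{√s ν} e^{-y²} dy = -(1/2) erf(√s ν)`. -/
theorem stmt_18 (s : ℝ) (hs : 0 < s) (ν : ℝ) :
    IntegrableOn
      (fun lam : ℝ => (Real.exp (-(s * lam)) - 1) / (lam * Real.sqrt (lam - ν ^ 2)))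
      (Ioi (ν ^ 2)) ∧
    (ν / (2 * Real.pi)) *
        ∫ lam in Ioi (ν ^ 2), (Real.exp (-(s * lam)) - 1) / (lam * Real.sqrt (lam - ν ^ 2))
      = -(Real.sqrt Real.pi)⁻¹ * ∫ y in (0 : ℝ)..(Real.sqrt s * ν), Real.exp (-y ^ 2) := by
  have h_neg : (fun x => (exp (-(s * x)) - 1) / (x * √(x - ν ^ 2)))
      = fun x => -((1 - exp (-(√s ^ 2 * x))) / (x * √(x - ν ^ 2))) := by
    ext x
    rw [sq_sqrt hs.le]
    ring
  have h_gauss :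
      ν * ∫ u in 0..√s, exp (-(u ^ 2 * ν ^ 2)) = ∫ y in 0..√s * ν, exp (-y ^ 2) := by
    simp_rw [← mul_pow]
    simpa using intervalIntegral.mul_integral_comp_mul_right (f := fun y => exp (-y ^ 2)) (c := ν)
      (a := 0) (b := √s)
  rw [h_neg]
  refine ⟨(integrableOn_one_sub_exp_div_mul_sqrt_sub (sqrt_nonneg s) (sq_nonneg ν)).neg, ?_⟩
  rw [integral_neg, integral_one_sub_exp_div_mul_sqrt_sub (sqrt_nonneg s) (sq_nonneg ν),
    ← h_gauss]
  field_simp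
  rw [sq_sqrt pi_pos.le]
end
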